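/- arXiv:math/0608661 — 7 statements merged into one kernel-verified Lean document; each statement's English description precedes it below -/
import Mathlib

section
/- If x_1, ..., x_r is a regular sequence on a module M, then the limit closure of {x_1,...,x_r} in M equals (x_1,...,x_r)M; that is, for every n ≥ 0, the colon submodule ((x_1^{n+1},...,x_r^{n+1})M :_M (x_1⋯x_r)^n) equals (x_1,...,x_r)M. -/
/-- The limit closure of the sequence `xs = x₁, …, x_r` in the `R`-module `M`:
the union over `n ≥ 0` of the colon submodules
`((x₁^{n+1}, …, x_r^{n+1})M :_M (x₁⋯x_r)^n)`. -/
noncomputable def limitClosure {R : Type*} [CommRing R] (M : Type*) [AddCommGroup M]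
    [Module R M] (xs : List R) : Submodule R M :=
  ⨆ n : ℕ, Submodule.comap (LinearMap.lsmul R M (xs.prod ^ n))
    (Ideal.span ((· ^ (n + 1)) '' {x | x ∈ xs}) • (⊤ : Submodule R M))

namespace LimitClosureAux

variable {R : Type*} [CommRing R] {M : Type*} [AddCommGroup M] [Module R M]

/-- The monomial `∏ xᵢ^(α i)` in the entries of the list `xs`. -/
noncomputable def mon (xs : List R) (α : ℕ →₀ ℕ) : R :=
  α.prod fun i k => (xs.getD i 1) ^ k

lemma mon_zero (xs : List R) : mon xs 0 = 1 := Finsupp.prod_zero_index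

lemma mon_add (xs : List R) (α β : ℕ →₀ ℕ) : mon xs (α + β) = mon xs α * mon xs β :=
  Finsupp.prod_add_index (fun i _ => pow_zero _) (fun i _ k l => pow_add _ k l)

lemma mon_single (xs : List R) (i k : ℕ) : mon xs (Finsupp.single i k) = (xs.getD i 1) ^ k :=
  Finsupp.prod_single_index (pow_zero _)

/-- Degree of a multi-index. -/
def deg (α : ℕ →₀ ℕ) : ℕ := α.sum fun _ k => k

lemma deg_add (α β : ℕ →₀ ℕ) : deg (α + β) = deg α + deg β :=
  Finsupp.sum_add_index (fun _ _ => rfl) (fun _ _ _ _ => rfl)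

lemma deg_single (i k : ℕ) : deg (Finsupp.single i k) = k :=
  Finsupp.sum_single_index rfl

/-- Value of a formal `M`-coefficient polynomial at `xs`. -/
noncomputable def pval (xs : List R) : ((ℕ →₀ ℕ) →₀ M) →ₗ[R] M :=
  Finsupp.lsum ℕ fun α => LinearMap.lsmul R M (mon xs α)

lemma pval_single (xs : List R) (α : ℕ →₀ ℕ) (m : M) :
    pval xs (Finsupp.single α m) = mon xs α • m := by
  simp [pval]

lemma pval_apply (xs : List R) (c : (ℕ →₀ ℕ) →₀ M) :
    pval xs c = c.sum fun α m => mon xs α • m := rfl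

/-- The submodule spanned by `mon xs α • u` for `α ∈ A` and `u ∈ N`. -/
def VS (xs : List R) (A : Set (ℕ →₀ ℕ)) (N : Submodule R M) : Submodule R M :=
  Submodule.span R {v | ∃ α ∈ A, ∃ u ∈ N, v = mon xs α • u}

lemma smul_mem_VS {xs : List R} {A : Set (ℕ →₀ ℕ)} {N : Submodule R M} {α : ℕ →₀ ℕ}
    (hα : α ∈ A) {u : M} (hu : u ∈ N) : mon xs α • u ∈ VS xs A N :=
  Submodule.subset_span ⟨α, hα, u, hu, rfl⟩

lemma VS_mono {xs : List R} {A B : Set (ℕ →₀ ℕ)} {N N' : Submodule R M}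
    (hAB : A ⊆ B) (hN : N ≤ N') : VS xs A N ≤ VS xs B N' := by
  apply Submodule.span_le.2
  rintro v ⟨α, hα, u, hu, rfl⟩
  exact smul_mem_VS (hAB hα) (hN hu)

lemma mem_VS_iff {xs : List R} {A : Set (ℕ →₀ ℕ)} {N : Submodule R M} {v : M} :
    v ∈ VS xs A N ↔ ∃ c : (ℕ →₀ ℕ) →₀ M,
      (↑c.support ⊆ A) ∧ (∀ β, c β ∈ N) ∧ pval xs c = v := by
  constructor
  · intro hv
    induction hv using Submodule.span_induction with
    | mem v hv =>
      obtain ⟨α, hα, u, hu, rfl⟩ := hv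
      refine ⟨Finsupp.single α u, ?_, ?_, pval_single _ _ _⟩
      · exact (Finset.coe_subset.2 Finsupp.support_single_subset).trans (by simpa using hα)
      · intro β
        rcases eq_or_ne β α with rfl | hne
        · simpa using hu
        · rw [Finsupp.single_eq_of_ne' (Ne.symm hne)]
          exact zero_mem _
    | zero => exact ⟨0, by simp, fun β => by simp, by simp⟩
    | add v w _ _ ihv ihw =>
      obtain ⟨c, hc, hcN, rfl⟩ := ihv
      obtain ⟨c', hc', hcN', rfl⟩ := ihw
      refine ⟨c + c', ?_, fun β => add_mem (hcN β) (hcN' β), by simp⟩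
      exact (Finset.coe_subset.2 Finsupp.support_add).trans (by
        rw [Finset.coe_union]; exact Set.union_subset hc hc')
    | smul r v _ ihv =>
      obtain ⟨c, hc, hcN, rfl⟩ := ihv
      refine ⟨r • c, ?_, fun β => by simpa using Submodule.smul_mem _ r (hcN β), by simp⟩
      exact (Finset.coe_subset.2 Finsupp.support_smul).trans hc
  · rintro ⟨c, hc, hcN, rfl⟩
    rw [pval_apply, Finsupp.sum]
    exact Submodule.sum_mem _ fun α hα => smul_mem_VS (hc hα) (hcN α)

lemma deg_eq_zero_iff (α : ℕ →₀ ℕ) : deg α = 0 ↔ α = 0 := by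
  constructor
  · intro h
    ext i
    by_cases hi : i ∈ α.support
    · exfalso
      have hpos : 0 < deg α := by
        rw [deg, Finsupp.sum]
        exact Finset.sum_pos' (fun _ _ => Nat.zero_le _)
          ⟨i, hi, Nat.pos_of_ne_zero (Finsupp.mem_support_iff.mp hi)⟩
      omega
    · simpa using Finsupp.notMem_support_iff.mp hi
  · rintro rfl; simp [deg]

/-- Multi-indices of degree `d` supported in the first `r` variables. -/
def Adeg (r d : ℕ) : Set (ℕ →₀ ℕ) := {α | deg α = d ∧ ∀ i ∈ α.support, i < r}

lemma decompose_Adeg {r d : ℕ} {α : ℕ →₀ ℕ} (hα : α ∈ Adeg r (d + 1)) :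
    ∃ i β, i < r ∧ β ∈ Adeg r d ∧ α = β + Finsupp.single i 1 := by
  obtain ⟨hd, hs⟩ := hα
  have hα0 : α ≠ 0 := by
    intro h; rw [h] at hd; simp [deg] at hd
  obtain ⟨i, hi⟩ := Finsupp.support_nonempty_iff.mpr hα0
  have h1 : Finsupp.single i 1 ≤ α := by
    rw [Finsupp.single_le_iff]
    exact Nat.one_le_iff_ne_zero.mpr (Finsupp.mem_support_iff.mp hi)
  refine ⟨i, α - Finsupp.single i 1, hs i hi, ⟨?_, ?_⟩, ?_⟩
  · have := deg_add (α - Finsupp.single i 1) (Finsupp.single i 1)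
    rw [tsub_add_cancel_of_le h1, hd, deg_single] at this
    omega
  · intro j hj
    exact hs j (Finsupp.support_tsub hj)
  · rw [tsub_add_cancel_of_le h1]

lemma getD_mem_ofList {xs : List R} {i : ℕ} (hi : i < xs.length) :
    xs.getD i 1 ∈ Ideal.ofList xs := by
  rw [List.getD_eq_getElem _ _ hi]
  exact Ideal.subset_span (xs.getElem_mem hi)

lemma mon_mem_pow {xs : List R} {d : ℕ} {α : ℕ →₀ ℕ} (hα : α ∈ Adeg xs.length d) :
    mon xs α ∈ (Ideal.ofList xs) ^ d := by
  induction d generalizing α with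
  | zero =>
    have : α = 0 := (deg_eq_zero_iff α).mp hα.1
    rw [this, mon_zero, pow_zero, Ideal.one_eq_top]
    trivial
  | succ d ih =>
    obtain ⟨i, β, hir, hβ, rfl⟩ := decompose_Adeg hα
    rw [mon_add, mon_single, pow_one, pow_succ]
    exact Ideal.mul_mem_mul (ih hβ) (getD_mem_ofList hir)



lemma VS_Adeg_top_le_pow_smul (xs : List R) (k : ℕ) :
    VS xs (Adeg xs.length k) (⊤ : Submodule R M) ≤ (Ideal.ofList xs) ^ k • ⊤ := by
  apply Submodule.span_le.2
  rintro v ⟨α, hα, u, -, rfl⟩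
  exact Submodule.smul_mem_smul (mon_mem_pow hα) trivial

lemma pow_smul_top_eq_VS (xs : List R) (k : ℕ) :
    (Ideal.ofList xs) ^ k • (⊤ : Submodule R M) = VS xs (Adeg xs.length k) ⊤ := by
  refine le_antisymm ?_ (VS_Adeg_top_le_pow_smul xs k)
  induction k with
  | zero =>
    rw [pow_zero, Ideal.one_eq_top, Submodule.top_smul]
    intro m _
    have hmem : (0 : ℕ →₀ ℕ) ∈ Adeg xs.length 0 := ⟨by simp [deg], by simp⟩
    have : m = mon xs 0 • m := by rw [mon_zero, one_smul]
    rw [this]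
    exact smul_mem_VS hmem trivial
  | succ k ih =>
    rw [pow_succ', ← Ideal.smul_eq_mul, Submodule.smul_assoc]
    refine Submodule.smul_le.2 fun z hz w hw => ?_
    have hw' : w ∈ VS xs (Adeg xs.length k) (⊤ : Submodule R M) := ih hw
    clear hw ih
    induction hz using Submodule.span_induction with
    | zero => rw [zero_smul]; exact zero_mem _
    | add z₁ z₂ _ _ ih₁ ih₂ => rw [add_smul]; exact add_mem ih₁ ih₂
    | smul r z _ ihz => rw [smul_assoc]; exact Submodule.smul_mem _ r ihz
    | mem z hzxs =>
      induction hw' using Submodule.span_induction with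
      | zero => rw [smul_zero]; exact zero_mem _
      | add w₁ w₂ _ _ ih₁ ih₂ => rw [smul_add]; exact add_mem ih₁ ih₂
      | smul r w _ ihw =>
        rw [smul_comm]; exact Submodule.smul_mem _ r ihw
      | mem w hwm =>
        obtain ⟨α, hα, u, -, rfl⟩ := hwm
        obtain ⟨i, hi, rfl⟩ := List.mem_iff_getElem.mp hzxs
        have : xs[i] • mon xs α • u = mon xs (Finsupp.single i 1 + α) • u := by
          rw [mon_add, mon_single, pow_one, mul_smul, List.getD_eq_getElem _ _ hi]
        rw [this]
        have hmem : Finsupp.single i 1 + α ∈ Adeg xs.length (k + 1) := ⟨?_, ?_⟩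
        exact smul_mem_VS hmem trivial
        · rw [deg_add, deg_single, hα.1]; omega
        · intro j hj
          rcases Finset.mem_union.mp (Finsupp.support_add hj) with h | h
          · have := Finsupp.support_single_subset h
            simp only [Finset.mem_singleton] at this
            omega
          · exact hα.2 j h

lemma VS_Adeg_smul_le_pow_smul (xs : List R) (d : ℕ) :
    VS xs (Adeg xs.length d) ((Ideal.ofList xs) • ⊤ : Submodule R M) ≤
      (Ideal.ofList xs) ^ (d + 1) • ⊤ := by
  apply Submodule.span_le.2
  rintro v ⟨α, hα, u, hu, rfl⟩
  rw [pow_succ, ← Ideal.smul_eq_mul, Submodule.smul_assoc]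
  exact Submodule.smul_mem_smul (mon_mem_pow hα) hu

lemma pow_succ_smul_top_le_VS (xs : List R) (d : ℕ) :
    (Ideal.ofList xs) ^ (d + 1) • (⊤ : Submodule R M) ≤
      VS xs (Adeg xs.length d) ((Ideal.ofList xs) • ⊤) := by
  rw [pow_smul_top_eq_VS]
  apply Submodule.span_le.2
  rintro v ⟨α, hα, u, -, rfl⟩
  obtain ⟨i, β, hir, hβ, rfl⟩ := decompose_Adeg hα
  have : mon xs (β + Finsupp.single i 1) • u = mon xs β • (xs.getD i 1 • u) := by
    rw [mon_add, mon_single, pow_one, mul_smul]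
  rw [this]
  exact smul_mem_VS hβ (Submodule.smul_mem_smul (getD_mem_ofList hir) trivial)



lemma ofList_pow_mono {I J : Ideal R} (h : I ≤ J) (k : ℕ) : I ^ k ≤ J ^ k := by
  induction k with
  | zero => simp
  | succ k ih => rw [pow_succ, pow_succ]; exact Ideal.mul_mono ih h

open RingTheory.Sequence in
lemma append_extract {xs : List R} {y : R} (h : IsWeaklyRegular M (xs ++ [y])) :
    IsWeaklyRegular M xs ∧
      ∀ u : M, y • u ∈ (Ideal.ofList xs • ⊤ : Submodule R M) →
        u ∈ (Ideal.ofList xs • ⊤ : Submodule R M) := by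
  rw [isWeaklyRegular_append_iff] at h
  obtain ⟨h1, h2⟩ := h
  refine ⟨h1, fun u hu => ?_⟩
  have hreg := (isWeaklyRegular_singleton_iff _ y).mp h2
  have h0 : y • (Submodule.Quotient.mk u : M ⧸ (Ideal.ofList xs • ⊤ : Submodule R M)) = 0 := by
    rw [← Submodule.Quotient.mk_smul]
    exact (Submodule.Quotient.mk_eq_zero _).2 hu
  refine (Submodule.Quotient.mk_eq_zero _).1 (hreg ?_)
  show y • _ = y • (0 : M ⧸ (Ideal.ofList xs • ⊤ : Submodule R M))
  rw [h0, smul_zero]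

lemma mon_append {xs : List R} {y : R} {α : ℕ →₀ ℕ}
    (hα : ∀ i ∈ α.support, i < xs.length) : mon (xs ++ [y]) α = mon xs α :=
  Finsupp.prod_congr fun i hi => by rw [List.getD_append _ _ _ _ (hα i hi)]

lemma getD_append_self (xs : List R) (y : R) : (xs ++ [y]).getD xs.length 1 = y := by
  rw [List.getD_append_right _ _ _ _ le_rfl, Nat.sub_self]
  rfl

lemma pval_mapDomain (xs : List R) (f : (ℕ →₀ ℕ) → (ℕ →₀ ℕ)) (c : (ℕ →₀ ℕ) →₀ M) :
    pval xs (Finsupp.mapDomain f c) = c.sum fun α m => mon xs (f α) • m := by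
  rw [pval_apply]
  exact Finsupp.sum_mapDomain_index (fun β => smul_zero _) (fun β m₁ m₂ => smul_add _ _ _)

/-- The statement of quasi-regularity for a list. -/
def QR (xs : List R) (M : Type*) [AddCommGroup M] [Module R M] : Prop :=
  ∀ (d : ℕ) (c : (ℕ →₀ ℕ) →₀ M), ↑c.support ⊆ Adeg xs.length d →
    pval xs c ∈ ((Ideal.ofList xs) ^ (d + 1) • ⊤ : Submodule R M) →
    ∀ α, c α ∈ (Ideal.ofList xs • ⊤ : Submodule R M)

/-- Cancellation of an element regular modulo `(xs)M` from powers `(xs)^d M`,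
assuming quasi-regularity of `xs`. -/
lemma smul_mem_pow_smul_cancel {xs : List R} (hqr : QR xs M)
    {y : R} (hy : ∀ u : M, y • u ∈ (Ideal.ofList xs • ⊤ : Submodule R M) →
      u ∈ (Ideal.ofList xs • ⊤ : Submodule R M)) :
    ∀ (d : ℕ) (u : M), y • u ∈ ((Ideal.ofList xs) ^ d • ⊤ : Submodule R M) →
      u ∈ ((Ideal.ofList xs) ^ d • ⊤ : Submodule R M) := by
  intro d
  induction d with
  | zero => intro u _; rw [pow_zero, Ideal.one_eq_top, Submodule.top_smul]; trivial
  | succ d ih =>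
    intro u hu
    have hu' : u ∈ (Ideal.ofList xs) ^ d • (⊤ : Submodule R M) :=
      ih u (Submodule.smul_mono_left (Ideal.pow_le_pow_right (Nat.le_succ d)) hu)
    rw [pow_smul_top_eq_VS] at hu'
    obtain ⟨c, hcs, -, rfl⟩ := mem_VS_iff.mp hu'
    have hyc : pval xs (y • c) ∈ ((Ideal.ofList xs) ^ (d + 1) • ⊤ : Submodule R M) := by
      rw [map_smul]; exact hu
    have hco := hqr d (y • c) ((Finset.coe_subset.2 Finsupp.support_smul).trans hcs) hyc
    refine VS_Adeg_smul_le_pow_smul xs d (mem_VS_iff.mpr ⟨c, hcs, fun β => ?_, rfl⟩)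
    exact hy (c β) (by simpa using hco β)

open RingTheory.Sequence in
theorem qr_of_isWeaklyRegular :
    ∀ (xs : List R), IsWeaklyRegular M xs → QR xs M := by
  intro xs
  induction xs using List.reverseRecOn with
  | nil =>
    intro _ d c hsupp hval α
    have hbot : (Ideal.ofList ([] : List R)) = ⊥ := Ideal.ofList_nil
    rw [hbot, Submodule.bot_smul]
    have hval0 : pval ([] : List R) c = 0 := by
      have h1 : (Ideal.ofList ([] : List R)) ^ (d + 1) = ⊥ := by
        rw [hbot, ← Ideal.zero_eq_bot, zero_pow d.succ_ne_zero]
      rw [h1, Submodule.bot_smul, Submodule.mem_bot] at hval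
      exact hval
    have hz : ∀ β ∈ c.support, β = (0 : ℕ →₀ ℕ) := by
      intro β hβ
      ext i
      by_cases hi : i ∈ β.support
      · exact absurd ((hsupp hβ).2 i hi) (Nat.not_lt_zero i)
      · simpa using Finsupp.notMem_support_iff.mp hi
    have hsub : c.support ⊆ {0} := fun β hβ => Finset.mem_singleton.2 (hz β hβ)
    have hc : c = Finsupp.single 0 (c 0) := Finsupp.support_subset_singleton.mp hsub
    have hc0 : c 0 = 0 := by
      have := hval0
      rw [hc, pval_single, mon_zero, one_smul] at this
      exact this
    rw [Submodule.mem_bot]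
    rcases eq_or_ne α 0 with rfl | hne
    · exact hc0
    · rw [hc, Finsupp.single_eq_of_ne' (Ne.symm hne)]
  | append_singleton xs y ih =>
    intro hw
    classical
    obtain ⟨hxs, hy⟩ := append_extract hw
    have hqr' : QR xs M := ih hxs
    set n := xs.length with hn
    have hlen : (xs ++ [y]).length = n + 1 := by simp [hn]
    have hI'I : Ideal.ofList xs ≤ Ideal.ofList (xs ++ [y]) := by
      rw [Ideal.ofList_append]; exact le_sup_left
    have hyI : y ∈ Ideal.ofList (xs ++ [y]) := Ideal.subset_span (by simp)
    intro d
    induction d with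
    | zero =>
      intro c hsupp hval α
      have hz : ∀ β ∈ c.support, β = (0 : ℕ →₀ ℕ) := fun β hβ =>
        (deg_eq_zero_iff β).mp (hsupp hβ).1
      have hsub : c.support ⊆ {0} := fun β hβ => Finset.mem_singleton.2 (hz β hβ)
      have hc : c = Finsupp.single 0 (c 0) := Finsupp.support_subset_singleton.mp hsub
      have hval' : c 0 ∈ (Ideal.ofList (xs ++ [y]) • ⊤ : Submodule R M) := by
        have := hval
        rw [hc, pval_single, mon_zero, one_smul, pow_one] at this
        exact this
      rcases eq_or_ne α 0 with rfl | hne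
      · exact hval'
      · rw [hc, Finsupp.single_eq_of_ne' (Ne.symm hne)]; exact zero_mem _
    | succ d ihd =>
      intro c hsupp hval
      -- (a) re-represent with coefficients in I•⊤
      have hval' := pow_succ_smul_top_le_VS (xs ++ [y]) (d + 1) hval
      obtain ⟨w, hwsupp, hwco, hwval⟩ := mem_VS_iff.mp hval'
      rw [hlen] at hwsupp
      -- (b) e := c - w has value 0
      set e : (ℕ →₀ ℕ) →₀ M := c - w with he
      have hesupp : ↑e.support ⊆ Adeg (n + 1) (d + 1) := by
        refine (Finset.coe_subset.2 Finsupp.support_sub).trans ?_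
        rw [Finset.coe_union]
        exact Set.union_subset (by rw [← hlen]; exact hsupp) hwsupp
      have heval : pval (xs ++ [y]) e = 0 := by
        rw [he, map_sub, hwval, sub_self]
      -- (c) reduce to coefficients of e
      suffices hecoeff : ∀ α, e α ∈ (Ideal.ofList (xs ++ [y]) • ⊤ : Submodule R M) by
        intro α
        have : c α = e α + w α := by rw [he, Finsupp.sub_apply]; abel
        rw [this]
        exact add_mem (hecoeff α) (hwco α)
      -- (d) split e according to the exponent of the last variable
      set e0 : (ℕ →₀ ℕ) →₀ M := e.filter (fun β => β n = 0) with he0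
      set ep : (ℕ →₀ ℕ) →₀ M := e.filter (fun β => ¬ β n = 0) with hep
      have hsplit : e0 + ep = e := Finsupp.filter_pos_add_filter_neg e _
      set G : (ℕ →₀ ℕ) →₀ M := Finsupp.mapDomain (fun β => β - Finsupp.single n 1) ep with hG
      have he0supp : ∀ β ∈ e0.support, β ∈ Adeg (n + 1) (d + 1) ∧ β n = 0 := by
        intro β hβ
        rw [he0, Finsupp.support_filter, Finset.mem_filter] at hβ
        exact ⟨hesupp hβ.1, hβ.2⟩
      have hepsupp : ∀ β ∈ ep.support, β ∈ Adeg (n + 1) (d + 1) ∧ β n ≠ 0 := by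
        intro β hβ
        rw [hep, Finsupp.support_filter, Finset.mem_filter] at hβ
        exact ⟨hesupp hβ.1, hβ.2⟩
      have he0supp' : ∀ β ∈ e0.support, ∀ i ∈ β.support, i < n := by
        intro β hβ i hi
        obtain ⟨⟨-, hlt⟩, hβn⟩ := he0supp β hβ
        have hin : i ≠ n := fun h => (Finsupp.mem_support_iff.mp hi) (h ▸ hβn)
        have := hlt i hi
        omega
      -- (e) evaluate the two pieces
      have he0val : pval (xs ++ [y]) e0 = pval xs e0 := by
        rw [pval_apply, pval_apply]
        exact Finsupp.sum_congr fun β hβ => by rw [mon_append (he0supp' β hβ)]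
      have hdecomp : ∀ β : ℕ →₀ ℕ, β n ≠ 0 →
          mon (xs ++ [y]) β = y * mon (xs ++ [y]) (β - Finsupp.single n 1) := by
        intro β hβn
        have h1 : Finsupp.single n 1 ≤ β := Finsupp.single_le_iff.mpr
          (Nat.one_le_iff_ne_zero.mpr hβn)
        conv_lhs => rw [← tsub_add_cancel_of_le h1]
        rw [mon_add, mon_single, pow_one, getD_append_self, mul_comm]
      have hepval : pval (xs ++ [y]) ep = y • pval (xs ++ [y]) G := by
        rw [hG, pval_mapDomain, pval_apply, Finsupp.smul_sum]
        refine Finsupp.sum_congr fun β hβ => ?_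
        rw [hdecomp β (hepsupp β hβ).2, mul_smul]
      -- value equation: pval xs e0 + y • pval (xs++[y]) G = 0
      have hkey : pval xs e0 + y • pval (xs ++ [y]) G = 0 := by
        rw [← he0val, ← hepval, ← map_add, hsplit, heval]
      -- (f) support of G
      have hGsupp : ↑G.support ⊆ Adeg (n + 1) d := by
        intro β' hβ'
        obtain ⟨β, hβ, rfl⟩ := Finset.mem_image.mp (Finsupp.mapDomain_support hβ')
        obtain ⟨⟨hdeg, hlt⟩, hβn⟩ := hepsupp β hβ
        have h1 : Finsupp.single n 1 ≤ β := Finsupp.single_le_iff.mpr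
          (Nat.one_le_iff_ne_zero.mpr hβn)
        constructor
        · have := deg_add (β - Finsupp.single n 1) (Finsupp.single n 1)
          rw [tsub_add_cancel_of_le h1, hdeg, deg_single] at this
          omega
        · intro i hi
          exact hlt i (Finsupp.support_tsub hi)
      -- (g) y • pval G ∈ I'^(d+1) • ⊤, cancel y
      have he0mem : pval xs e0 ∈ ((Ideal.ofList xs) ^ (d + 1) • ⊤ : Submodule R M) := by
        rw [pow_smul_top_eq_VS]
        refine mem_VS_iff.mpr ⟨e0, ?_, fun β => trivial, rfl⟩
        intro β hβ
        exact ⟨(he0supp β hβ).1.1, he0supp' β hβ⟩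
      have hGval : pval (xs ++ [y]) G ∈ ((Ideal.ofList xs) ^ (d + 1) • ⊤ : Submodule R M) := by
        refine smul_mem_pow_smul_cancel hqr' hy (d + 1) _ ?_
        have : y • pval (xs ++ [y]) G = - pval xs e0 := by
          rw [eq_neg_iff_add_eq_zero, add_comm]; exact hkey
        rw [this]
        exact neg_mem he0mem
      -- (h) coefficients of G are in I•⊤ by the inner induction hypothesis
      have hGco : ∀ β, G β ∈ (Ideal.ofList (xs ++ [y]) • ⊤ : Submodule R M) := by
        refine ihd G (by rw [hlen]; exact hGsupp) ?_
        exact Submodule.smul_mono_left (ofList_pow_mono hI'I (d+1)) hGval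
      -- (i) coefficients of e0 are in I'•⊤ + yM ⊆ I•⊤
      have hGval' : pval (xs ++ [y]) G ∈ VS xs (Adeg xs.length (d + 1)) (⊤ : Submodule R M) := by
        rw [← pow_smul_top_eq_VS]; exact hGval
      obtain ⟨W, hWsupp, -, hWval⟩ := mem_VS_iff.mp hGval'
      have hcomb : pval xs (e0 + y • W) = 0 := by
        rw [map_add, map_smul, hWval]
        exact hkey
      have he0co : ∀ β, e0 β ∈ (Ideal.ofList (xs ++ [y]) • ⊤ : Submodule R M) := by
        have hcsupp : ↑(e0 + y • W).support ⊆ Adeg n (d + 1) := by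
          refine (Finset.coe_subset.2 Finsupp.support_add).trans ?_
          rw [Finset.coe_union]
          refine Set.union_subset ?_
            ((Finset.coe_subset.2 Finsupp.support_smul).trans hWsupp)
          intro β hβ
          exact ⟨(he0supp β hβ).1.1, he0supp' β hβ⟩
        have := hqr' (d + 1) (e0 + y • W) hcsupp (by rw [hcomb]; exact zero_mem _)
        intro β
        have hββ := this β
        rw [Finsupp.add_apply, Finsupp.smul_apply] at hββ
        have h1 : e0 β + y • W β ∈ (Ideal.ofList (xs ++ [y]) • ⊤ : Submodule R M) :=
          Submodule.smul_mono_left hI'I hββ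
        have h2 : y • W β ∈ (Ideal.ofList (xs ++ [y]) • ⊤ : Submodule R M) :=
          Submodule.smul_mem_smul hyI trivial
        have := sub_mem h1 h2
        simpa using this
      -- (j) conclude
      intro α
      have hα : e α = e0 α + ep α := by rw [← hsplit]; rfl
      rw [hα]
      refine add_mem (he0co α) ?_
      by_cases hαn : α n = 0
      · rw [hep, Finsupp.filter_apply_neg _ _ (by simpa using hαn)]
        exact zero_mem _
      · have hinj : Set.InjOn (fun β : ℕ →₀ ℕ => β - Finsupp.single n 1) {β | β n ≠ 0} := by
          intro β₁ hβ₁ β₂ hβ₂ heq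
          have h₁ : Finsupp.single n 1 ≤ β₁ := Finsupp.single_le_iff.mpr
            (Nat.one_le_iff_ne_zero.mpr hβ₁)
          have h₂ : Finsupp.single n 1 ≤ β₂ := Finsupp.single_le_iff.mpr
            (Nat.one_le_iff_ne_zero.mpr hβ₂)
          have : β₁ - Finsupp.single n 1 + Finsupp.single n 1 =
              β₂ - Finsupp.single n 1 + Finsupp.single n 1 :=
            congrArg (· + Finsupp.single n 1) heq
          rwa [tsub_add_cancel_of_le h₁, tsub_add_cancel_of_le h₂] at this
        have hsubS : ↑ep.support ⊆ {β : ℕ →₀ ℕ | β n ≠ 0} := by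
          intro β hβ
          exact (hepsupp β hβ).2
        have := Finsupp.mapDomain_apply' {β : ℕ →₀ ℕ | β n ≠ 0}
          ep hsubS hinj (a := α) hαn
        rw [← hG] at this
        rw [← this]
        exact hGco _


lemma list_prod_mem_pow (xs : List R) : xs.prod ∈ (Ideal.ofList xs) ^ xs.length := by
  induction xs with
  | nil => simp
  | cons z t ih =>
    rw [List.prod_cons, List.length_cons, pow_succ']
    refine Ideal.mul_mem_mul (Ideal.subset_span (by simp)) ?_
    refine ofList_pow_mono ?_ t.length ih
    rw [Ideal.ofList_cons]
    exact le_sup_right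

/-- Degree-`k` multi-indices for `r` variables with some exponent at least `N+1`. -/
def Bd (r N k : ℕ) : Set (ℕ →₀ ℕ) := {α | α ∈ Adeg r k ∧ ∃ i, N + 1 ≤ α i}

lemma Bd_subset_Adeg {r N k : ℕ} : Bd r N k ⊆ Adeg r k := fun _ h => h.1

/-- The bump step: if `v` lies in the span of bad monomials of degree `k` and in `I^(k+1)M`,
then it lies in the span of bad monomials of degree `k+1`. -/
lemma bump {xs : List R} (hqr : QR xs M) {N k : ℕ} {v : M}
    (hv : v ∈ VS xs (Bd xs.length N k) (⊤ : Submodule R M))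
    (hval : v ∈ ((Ideal.ofList xs) ^ (k + 1) • ⊤ : Submodule R M)) :
    v ∈ VS xs (Bd xs.length N (k + 1)) (⊤ : Submodule R M) := by
  obtain ⟨c, hcs, -, rfl⟩ := mem_VS_iff.mp (VS_mono Set.Subset.rfl le_top hv)
  have hcs' : ↑c.support ⊆ Adeg xs.length k := hcs.trans Bd_subset_Adeg
  have hco := hqr k c hcs' hval
  rw [pval_apply, Finsupp.sum]
  refine Submodule.sum_mem _ fun α hα => ?_
  have hαBd : α ∈ Bd xs.length N k := hcs hα
  have hcα : c α ∈ VS xs (Adeg xs.length 1) (⊤ : Submodule R M) := by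
    rw [← pow_smul_top_eq_VS, pow_one]
    exact hco α
  clear hco hα hcs hcs' hval
  generalize c α = a at hcα ⊢
  induction hcα using Submodule.span_induction with
  | zero => rw [smul_zero]; exact zero_mem _
  | add a b _ _ iha ihb => rw [smul_add]; exact add_mem iha ihb
  | smul r a _ iha => rw [smul_comm]; exact Submodule.smul_mem _ r iha
  | mem a ha =>
    obtain ⟨β, hβ, u, -, rfl⟩ := ha
    rw [smul_smul, ← mon_add]
    have hmem : α + β ∈ Bd xs.length N (k + 1) := by
      refine ⟨⟨?_, ?_⟩, ?_⟩
      · rw [deg_add, hαBd.1.1, hβ.1]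
      · intro i hi
        rcases Finset.mem_union.mp (Finsupp.support_add hi) with h | h
        · exact hαBd.1.2 i h
        · exact hβ.2 i h
      · obtain ⟨i, hiN⟩ := hαBd.2
        exact ⟨i, le_trans hiN (by simp)⟩
    exact smul_mem_VS hmem trivial

lemma mon_nsmul (xs : List R) (N : ℕ) (α : ℕ →₀ ℕ) : mon xs (N • α) = mon xs α ^ N := by
  induction N with
  | zero => rw [zero_smul, mon_zero, pow_zero]
  | succ N ih => rw [succ_nsmul, mon_add, ih, pow_succ]

lemma deg_nsmul (N : ℕ) (α : ℕ →₀ ℕ) : deg (N • α) = N * deg α := by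
  induction N with
  | zero => rw [zero_smul, Nat.zero_mul]; simp [deg]
  | succ N ih => rw [succ_nsmul, deg_add, ih]; ring

/-- The multi-index `(1,1,…,1)` for a list. -/
noncomputable def gam (r : ℕ) : ℕ →₀ ℕ := ∑ i ∈ Finset.range r, Finsupp.single i 1

lemma gam_apply_le (r : ℕ) (i : ℕ) : gam r i ≤ 1 := by
  rw [gam, Finset.sum_apply']
  by_cases hi : i < r
  · rw [Finset.sum_eq_single i (fun j _ hj => Finsupp.single_eq_of_ne' hj)
      (fun h => absurd (Finset.mem_range.2 hi) h)]
    simp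
  · rw [Finset.sum_eq_zero]
    · exact Nat.zero_le _
    intro j hj
    exact Finsupp.single_eq_of_ne' (fun h => hi (h ▸ Finset.mem_range.1 hj))

lemma gam_support (r : ℕ) : ∀ i ∈ (gam r).support, i < r := by
  intro i hi
  by_contra h
  refine Finsupp.mem_support_iff.mp hi ?_
  rw [gam, Finset.sum_apply']
  refine Finset.sum_eq_zero fun j hj => ?_
  exact Finsupp.single_eq_of_ne (fun hji => h (hji ▸ Finset.mem_range.1 hj))

lemma deg_gam (r : ℕ) : deg (gam r) = r := by
  induction r with
  | zero => simp [gam, deg]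
  | succ r ih => rw [gam, Finset.sum_range_succ, ← gam, deg_add, ih, deg_single]

lemma mon_gam (xs : List R) : mon xs (gam xs.length) = xs.prod := by
  induction xs using List.reverseRecOn with
  | nil => simp [gam, mon_zero]
  | append_singleton xs y ih =>
    have hlen : (xs ++ [y]).length = xs.length + 1 := by simp
    rw [hlen, gam, Finset.sum_range_succ, ← gam, mon_add, mon_single, pow_one,
      getD_append_self, mon_append (gam_support xs.length), ih, List.prod_append,
      List.prod_singleton]


open RingTheory.Sequence in
lemma main_colon {xs : List R} (hw : IsWeaklyRegular M xs) (N : ℕ) {u : M}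
    (hu : xs.prod ^ N • u ∈
      (Ideal.span ((· ^ (N + 1)) '' {x | x ∈ xs}) • ⊤ : Submodule R M)) :
    u ∈ (Ideal.ofList xs • ⊤ : Submodule R M) := by
  rcases Nat.eq_zero_or_pos N with rfl | hN
  · have himg : ((· ^ (0 + 1)) '' {x | x ∈ xs}) = {x | x ∈ xs} := by
      simp
    rw [himg] at hu
    simpa using hu
  rcases Nat.lt_or_ge xs.length 2 with hr | hr
  · -- r = 0 or r = 1
    interval_cases h : xs.length
    · -- r = 0
      rw [List.length_eq_zero_iff] at h
      subst h
      have hS : {x : R | x ∈ ([] : List R)} = ∅ := by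
        ext x; simp
      rw [hS] at hu
      simp only [Set.image_empty, Ideal.span_empty, Submodule.bot_smul,
        Submodule.mem_bot, List.prod_nil, one_pow, one_smul] at hu
      rw [hu]
      exact zero_mem _
    · -- r = 1
      rw [List.length_eq_one_iff] at h
      obtain ⟨z, rfl⟩ := h
      have hS : {x : R | x ∈ [z]} = {z} := by
        ext x; simp
      rw [hS, Set.image_singleton, List.prod_singleton,
        Submodule.ideal_span_singleton_smul] at hu
      obtain ⟨w, -, hweq⟩ := Submodule.mem_map.mp hu
      have hweq : z ^ (N + 1) • w = z ^ N • u := hweq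
      have hzreg : IsSMulRegular M z := (isWeaklyRegular_singleton_iff M z).mp hw
      have hcancel : z ^ N • (z • w) = z ^ N • u := by
        rw [← hweq, ← mul_smul, ← pow_succ]
      have := (hzreg.pow N) hcancel
      rw [← this]
      exact Submodule.smul_mem_smul (Ideal.subset_span (by simp)) trivial
  · -- r ≥ 2
    set r := xs.length with hrdef
    have hqr := qr_of_isWeaklyRegular xs hw
    set v := xs.prod ^ N • u with hv
    have hvI : ∀ k, k ≤ N * r → v ∈ ((Ideal.ofList xs) ^ k • ⊤ : Submodule R M) := by
      intro k hk
      have h1 : xs.prod ^ N ∈ (Ideal.ofList xs) ^ (N * r) := by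
        have h2 : xs.prod ^ N ∈ ((Ideal.ofList xs) ^ r) ^ N :=
          Ideal.pow_mem_pow (list_prod_mem_pow xs) N
        rwa [← pow_mul, mul_comm r N] at h2
      exact Submodule.smul_mono_left (Ideal.pow_le_pow_right hk)
        (Submodule.smul_mem_smul h1 trivial)
    have hstart : v ∈ VS xs (Bd r N (N + 1)) (⊤ : Submodule R M) := by
      refine Submodule.smul_le.mpr ?_ hu
      intro z hz w _
      induction hz using Submodule.span_induction with
      | zero => rw [zero_smul]; exact zero_mem _
      | add z₁ z₂ _ _ ih₁ ih₂ => rw [add_smul]; exact add_mem ih₁ ih₂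
      | smul t z _ ihz => rw [smul_assoc]; exact Submodule.smul_mem _ t ihz
      | mem z hzm =>
        obtain ⟨s, hs, rfl⟩ := hzm
        obtain ⟨i, hi, rfl⟩ := List.mem_iff_getElem.mp hs
        have heq : xs[i] ^ (N + 1) • w = mon xs (Finsupp.single i (N + 1)) • w := by
          rw [mon_single, List.getD_eq_getElem _ _ hi]
        rw [heq]
        have hmem : Finsupp.single i (N + 1) ∈ Bd r N (N + 1) := by
          refine ⟨⟨deg_single i (N + 1), ?_⟩, ⟨i, by simp⟩⟩
          intro j hj
          have := Finsupp.support_single_subset hj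
          simp only [Finset.mem_singleton] at this
          omega
        exact smul_mem_VS hmem trivial
    have hN1 : N + 1 ≤ N * r := by
      have h2r : N * 2 ≤ N * r := Nat.mul_le_mul_left N hr
      omega
    have hiter : ∀ k, N + 1 ≤ k → k ≤ N * r → v ∈ VS xs (Bd r N k) (⊤ : Submodule R M) := by
      intro k
      induction k with
      | zero => omega
      | succ k ih =>
        intro h1 h2
        rcases Nat.lt_or_ge N k with h | h
        · exact bump hqr (ih (by omega) (by omega)) (hvI (k + 1) h2)
        · have hk : k + 1 = N + 1 := by omega
          rw [hk]
          exact hstart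
    obtain ⟨c, hcs, -, hcval⟩ := mem_VS_iff.mp (hiter (N * r) hN1 le_rfl)
    set γ : ℕ →₀ ℕ := N • gam r with hγ
    have hmonγ : mon xs γ = xs.prod ^ N := by rw [hγ, mon_nsmul, mon_gam]
    have hdegγ : deg γ = N * r := by rw [hγ, deg_nsmul, deg_gam]
    have hsuppγ : ∀ i ∈ γ.support, i < r := fun i hi =>
      gam_support r i (Finsupp.support_smul hi)
    have hγle : ∀ i, γ i ≤ N := by
      intro i
      rw [hγ, Finsupp.smul_apply, smul_eq_mul]
      calc N * gam r i ≤ N * 1 := Nat.mul_le_mul_left N (gam_apply_le r i)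
        _ = N := mul_one N
    set e : (ℕ →₀ ℕ) →₀ M := Finsupp.single γ u - c with he
    have heval : pval xs e = 0 := by
      rw [he, map_sub, pval_single, hmonγ, hcval, sub_self]
    have hesupp : ↑e.support ⊆ Adeg r (N * r) := by
      refine (Finset.coe_subset.2 Finsupp.support_sub).trans ?_
      rw [Finset.coe_union]
      refine Set.union_subset ?_ (hcs.trans Bd_subset_Adeg)
      refine (Finset.coe_subset.2 Finsupp.support_single_subset).trans ?_
      intro β hβ
      rw [Finset.coe_singleton, Set.mem_singleton_iff] at hβ
      subst hβ
      exact ⟨hdegγ, hsuppγ⟩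
    have hfin := hqr (N * r) e hesupp (by rw [heval]; exact zero_mem _) γ
    have hcγ : c γ = 0 := by
      by_contra hcc
      obtain ⟨i, hi⟩ := (hcs (Finsupp.mem_support_iff.2 hcc)).2
      exact absurd (hγle i) (by omega)
    rw [he, Finsupp.sub_apply, Finsupp.single_eq_same, hcγ, sub_zero] at hfin
    exact hfin

open RingTheory.Sequence in
lemma comap_eq_smul_top {xs : List R} (hw : IsWeaklyRegular M xs) (n : ℕ) :
    Submodule.comap (LinearMap.lsmul R M (xs.prod ^ n))
      (Ideal.span ((· ^ (n + 1)) '' {x | x ∈ xs}) • (⊤ : Submodule R M)) =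
    Ideal.span {x | x ∈ xs} • (⊤ : Submodule R M) := by
  classical
  apply le_antisymm
  · intro u hu
    rw [Submodule.mem_comap, LinearMap.lsmul_apply] at hu
    exact main_colon hw n hu
  · intro u hu
    rw [Submodule.mem_comap, LinearMap.lsmul_apply]
    refine Submodule.smul_induction_on hu ?_ ?_
    · intro z hz w _
      induction hz using Submodule.span_induction with
      | zero =>
        rw [zero_smul, smul_zero]; exact zero_mem _
      | add z₁ z₂ _ _ ih₁ ih₂ =>
        rw [add_smul, smul_add]; exact add_mem ih₁ ih₂
      | smul t z _ ihz =>
        rw [smul_assoc, smul_comm]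
        exact Submodule.smul_mem _ t ihz
      | mem s hs =>
        have hprod : xs.prod = s * (xs.erase s).prod := (List.prod_erase hs).symm
        have hkey : xs.prod ^ n • (s • w) =
            s ^ (n + 1) • (((xs.erase s).prod ^ n) • w) := by
          rw [← mul_smul, ← mul_smul, hprod, mul_pow]
          ring_nf
        rw [hkey]
        exact Submodule.smul_mem_smul (Ideal.subset_span ⟨s, hs, rfl⟩) trivial
    · intro a b ha hb
      rw [smul_add]
      exact add_mem ha hb

end LimitClosureAux

/-- If `x₁, …, x_r` is a regular sequence on `M`, then the limit closure of
`{x₁,…,x_r}` in `M` equals `(x₁,…,x_r)M`. -/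
theorem limitClosure_eq_smul_of_isRegular {R : Type*} [CommRing R] [IsNoetherianRing R]
    {M : Type*} [AddCommGroup M] [Module R M] (xs : List R)
    (hreg : RingTheory.Sequence.IsRegular M xs) :
    limitClosure M xs = Ideal.span {x | x ∈ xs} • (⊤ : Submodule R M) := by
  have hw := hreg.toIsWeaklyRegular
  rw [limitClosure]
  have key := fun n => LimitClosureAux.comap_eq_smul_top hw n
  simp_rw [key]
  exact iSup_const
end

section
/- Let x be an element of the Jacobson radical of a Noetherian ring R and M a finitely generated R-module. If for all n ≥ 0 one has ((x^{n+1})M :_M x^n) = xM, then x is a nonzerodivisor on M. -/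
/-!
The kernels of multiplication by `x ^ n` on `M` form an ascending chain, which stabilizes at some
`K = ker x ^ n` because `M` is Noetherian. If `m ∈ K`, then `m` lies in the colon submodule
`((x^{n+1})M :_M x^n) = xM`, so `m = x • m'` with `x ^ (n + 1) • m' = 0`, i.e. `m' ∈ K`.
Hence `K ≤ xK`, and Nakayama's lemma gives `K = 0`: the power `x ^ n`, and with it `x`,
is a nonzerodivisor on `M`.
-/

open LinearMap Submodule Pointwise

section

variable {R M : Type*} [CommSemiring R] [AddCommMonoid M] [Module R M]

lemma monotone_ker_lsmul_pow (x : R) :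
    Monotone fun n : ℕ => ker (lsmul R M (x ^ n)) := by
  intro i j hij m hm
  obtain ⟨k, rfl⟩ := Nat.exists_eq_add_of_le hij
  simp only [mem_ker, lsmul_apply] at hm ⊢
  rw [pow_add, mul_comm, mul_smul, hm, smul_zero]

lemma exists_ker_lsmul_pow_succ_le [IsNoetherian R M] (x : R) :
    ∃ n : ℕ, ker (lsmul R M (x ^ (n + 1))) ≤ ker (lsmul R M (x ^ n)) := by
  obtain ⟨n, hn⟩ :=
    monotone_stabilizes_iff_noetherian.mpr inferInstance ⟨_, monotone_ker_lsmul_pow (M := M) x⟩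
  exact ⟨n, (hn (n + 1) n.le_succ).ge⟩

lemma ker_lsmul_pow_le_smul_of_colon_le {x : R} {n : ℕ}
    (hker : ker (lsmul R M (x ^ (n + 1))) ≤ ker (lsmul R M (x ^ n)))
    (hcolon : comap (lsmul R M (x ^ n)) (Ideal.span {x ^ (n + 1)} • (⊤ : Submodule R M))
      ≤ Ideal.span {x} • ⊤) :
    ker (lsmul R M (x ^ n)) ≤ Ideal.span {x} • ker (lsmul R M (x ^ n)) := by
  intro m hm
  have hm0 : x ^ n • m = 0 := hm
  have hmem : m ∈ x • (⊤ : Submodule R M) := by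
    rw [← ideal_span_singleton_smul]
    exact hcolon (by simp [hm0])
  obtain ⟨m', -, rfl⟩ := (mem_smul_pointwise_iff_exists _ _ _).mp hmem
  have hm' : m' ∈ ker (lsmul R M (x ^ n)) := hker <| by
    change x ^ (n + 1) • m' = 0
    rwa [pow_succ, mul_smul]
  exact smul_mem_smul (Ideal.mem_span_singleton_self x) hm'

end

/-- Let `x` be an element of the Jacobson radical of a Noetherian ring `R` and
`M` a finitely generated `R`-module. If for all `n ≥ 0` one has
`((x^{n+1})M :_M x^n) = xM`, then `x` is a nonzerodivisor on `M`. -/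
theorem isSMulRegular_of_colon_eq {R : Type*} [CommRing R] [IsNoetherianRing R]
    {M : Type*} [AddCommGroup M] [Module R M] [Module.Finite R M]
    (x : R) (hx : x ∈ Ideal.jacobson (⊥ : Ideal R))
    (h : ∀ n : ℕ, Submodule.comap (LinearMap.lsmul R M (x ^ n))
        (Ideal.span {x ^ (n + 1)} • (⊤ : Submodule R M))
      = Ideal.span {x} • (⊤ : Submodule R M)) :
    IsSMulRegular M x := by
  obtain ⟨n, hker⟩ := exists_ker_lsmul_pow_succ_le (M := M) x
  have hbot : ker (lsmul R M (x ^ n)) = ⊥ :=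
    eq_bot_of_le_smul_of_le_jacobson_bot _ _ (IsNoetherian.noetherian _)
      (ker_lsmul_pow_le_smul_of_colon_le hker (h n).le)
      ((Ideal.span_singleton_le_iff_mem _).mpr hx)
  have hreg : IsSMulRegular M (x ^ (n + 1)) :=
    isSMulRegular_of_ker_lsmul_eq_bot (eq_bot_iff.mpr (hbot ▸ hker))
  exact (IsSMulRegular.pow_iff n.succ_pos).mp hreg
end

section
/- Let x_1, ..., x_r be elements of the Jacobson radical of a Noetherian ring R and M a finitely generated R-module. If the limit closure of {x_1,...,x_r} in M equals (x_1,...,x_r)M, then x_1,...,x_r is a regular sequence on M. -/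
open Submodule Pointwise

section Helpers

variable {R : Type*} [CommRing R] {M : Type*} [AddCommGroup M] [Module R M]

lemma LCaux.mem_span_singleton_smul_top {r : R} {m : M} :
    m ∈ Ideal.span {r} • (⊤ : Submodule R M) ↔ ∃ u, m = r • u := by
  rw [Submodule.ideal_span_singleton_smul]
  constructor
  · rintro ⟨u, -, rfl⟩; exact ⟨u, rfl⟩
  · rintro ⟨u, rfl⟩; exact ⟨u, trivial, rfl⟩

lemma LCaux.exists_sum_of_mem_span_image_smul_top {ι : Type*} [DecidableEq ι]
    (s : Finset ι) (g : ι → R) (u : M)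
    (hu : u ∈ Ideal.span (g '' ↑s) • (⊤ : Submodule R M)) :
    ∃ b : ι → M, u = ∑ i ∈ s, g i • b i := by
  induction s using Finset.induction_on generalizing u with
  | empty =>
    refine ⟨0, ?_⟩
    simp only [Finset.coe_empty, Set.image_empty, Ideal.span_empty, Submodule.bot_smul,
      Submodule.mem_bot] at hu
    simp [hu]
  | @insert a s ha ih =>
    rw [Finset.coe_insert, Set.image_insert_eq, Ideal.span_insert, Submodule.sup_smul] at hu
    obtain ⟨v, hv, w, hw, rfl⟩ := Submodule.mem_sup.mp hu
    obtain ⟨v', rfl⟩ := LCaux.mem_span_singleton_smul_top.mp hv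
    obtain ⟨b, rfl⟩ := ih w hw
    refine ⟨Function.update b a v', ?_⟩
    rw [Finset.sum_insert ha, Function.update_self]
    congr 1
    refine Finset.sum_congr rfl fun i hi => ?_
    rw [Function.update_of_ne (ne_of_mem_of_not_mem hi ha)]

lemma LCaux.krull_jacobson [IsNoetherianRing R] [Module.Finite R M] (I : Ideal R)
    (hI : I ≤ Ideal.jacobson ⊥) : (⨅ n : ℕ, I ^ n • ⊤ : Submodule R M) = ⊥ := by
  obtain ⟨n, f, hf⟩ := Module.Finite.exists_fin' R M
  let e : ((Fin n → R) ⧸ LinearMap.ker f) ≃ₗ[R] M := f.quotKerEquivOfSurjective hf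
  have h0 : (⨅ k : ℕ, I ^ k • ⊤ : Submodule R ((Fin n → R) ⧸ LinearMap.ker f)) = ⊥ := by
    rw [eq_bot_iff]
    intro x hx
    rw [Ideal.mem_iInf_smul_pow_eq_bot_iff] at hx
    obtain ⟨r, hr⟩ := hx
    have hu : IsUnit ((r : R) * (-1) + 1) := Ideal.mem_jacobson_bot.mp (hI r.2) (-1)
    have h1 : ((r : R) * (-1) + 1) = 1 - (r : R) := by ring
    rw [h1] at hu
    have h2 : (1 - (r : R)) • x = (1 - (r : R)) • (0 : (Fin n → R) ⧸ LinearMap.ker f) := by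
      rw [sub_smul, one_smul, hr, sub_self, smul_zero]
    exact hu.smul_left_cancel.mp h2
  rw [eq_bot_iff]
  intro x hx
  have hx0 : e.symm x ∈ (⨅ k : ℕ, I ^ k • ⊤ :
      Submodule R ((Fin n → R) ⧸ LinearMap.ker f)) := by
    rw [Submodule.mem_iInf]
    intro k
    have h1 : Submodule.map (e.symm : M →ₗ[R] (Fin n → R) ⧸ LinearMap.ker f)
        (I ^ k • ⊤ : Submodule R M) = I ^ k • ⊤ := by
      rw [Submodule.map_smul'', Submodule.map_top, LinearEquiv.range]
    rw [← h1]
    exact Submodule.mem_map_of_mem (Submodule.mem_iInf _ |>.mp hx k)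
  rw [h0, Submodule.mem_bot] at hx0
  have h3 := congrArg e hx0
  simpa using h3

lemma LCaux.mkQ_mem_smul_top_of_mem_sup {P : Submodule R M} {J : Ideal R} {m : M}
    (hmem : m ∈ P ⊔ J • ⊤) : P.mkQ m ∈ J • (⊤ : Submodule R (M ⧸ P)) := by
  have h2 := Submodule.mem_map_of_mem (f := P.mkQ) hmem
  rw [Submodule.map_sup, Submodule.mkQ_map_self, bot_sup_eq, Submodule.map_smul'',
    Submodule.map_top, Submodule.range_mkQ] at h2
  exact h2

lemma LCaux.mon_mul_mem {t : ℕ} (y : Fin t → R) {n : ℕ} {e : Fin t → ℕ}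
    (he : e ∈ Finset.Nat.antidiagonalTuple t n) (i : Fin t) :
    (∏ j, y j ^ e j) * y i ∈ Ideal.span ((fun e : Fin t → ℕ => ∏ j, y j ^ e j) ''
      ↑(Finset.Nat.antidiagonalTuple t (n + 1))) := by
  classical
  refine Ideal.subset_span ⟨e + Pi.single i 1, ?_, ?_⟩
  · rw [Finset.mem_coe, Finset.Nat.mem_antidiagonalTuple]
    simp only [Pi.add_apply]
    rw [Finset.sum_add_distrib, Finset.Nat.mem_antidiagonalTuple.mp he, Finset.sum_pi_single']
    simp
  · simp only [Pi.add_apply]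
    have h1 : (∏ j, y j ^ (e j + (Pi.single i 1 : Fin t → ℕ) j))
        = (∏ j, y j ^ e j) * ∏ j, y j ^ (Pi.single i 1 : Fin t → ℕ) j := by
      rw [← Finset.prod_mul_distrib]
      exact Finset.prod_congr rfl fun j _ => pow_add _ _ _
    have h2 : (∏ j, y j ^ (Pi.single i 1 : Fin t → ℕ) j) = y i := by
      rw [Finset.prod_eq_single i (fun j _ hj => by rw [Pi.single_eq_of_ne hj, pow_zero])
        (fun hi => absurd (Finset.mem_univ i) hi)]
      rw [Pi.single_eq_same, pow_one]
    rw [h1, h2]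

lemma LCaux.list_members_eq_range (xs : List R) : {a | a ∈ xs} = Set.range xs.get := by
  ext a
  simp only [Set.mem_setOf_eq, Set.mem_range, List.mem_iff_get]

lemma LCaux.list_prod_eq_prod (xs : List R) : xs.prod = ∏ i, xs.get i := by
  conv_lhs => rw [← List.ofFn_get xs]
  exact List.prod_ofFn

/-- L1: anything in the `n`-th colon piece of the limit closure lies in `(xs)M`,
assuming the limit closure equals `(xs)M`. -/
lemma LCaux.mem_smul_of_pow_prod_smul_mem {xs : List R}
    (h : limitClosure M xs = Ideal.span {x | x ∈ xs} • ⊤)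
    {n : ℕ} {m : M} (hm : xs.prod ^ n • m ∈
      Ideal.span ((· ^ (n + 1)) '' {x | x ∈ xs}) • (⊤ : Submodule R M)) :
    m ∈ Ideal.span {x | x ∈ xs} • (⊤ : Submodule R M) := by
  rw [← h]
  exact le_iSup (fun n => Submodule.comap (LinearMap.lsmul R M (xs.prod ^ n))
    (Ideal.span ((· ^ (n + 1)) '' {x | x ∈ xs}) • (⊤ : Submodule R M))) n
    (Submodule.mem_comap.mpr (by simpa using hm))

/-- L2 (generalized colon property): mixed powers version. -/
lemma LCaux.mem_smul_of_mixed_powers {xs : List R}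
    (h : limitClosure M xs = Ideal.span {x | x ∈ xs} • ⊤)
    (e : Fin xs.length → ℕ) (m : M)
    (hm : (∏ i, xs.get i ^ e i) • m ∈
      Ideal.span (Set.range fun i => xs.get i ^ (e i + 1)) • (⊤ : Submodule R M)) :
    m ∈ Ideal.span {x | x ∈ xs} • (⊤ : Submodule R M) := by
  classical
  set A := Finset.univ.sup e with hA
  have he : ∀ i, e i ≤ A := fun i => Finset.le_sup (Finset.mem_univ i)
  set c := ∏ i, xs.get i ^ (A - e i) with hc
  apply LCaux.mem_smul_of_pow_prod_smul_mem h (n := A)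
  have h1 : xs.prod ^ A • m = c • ((∏ i, xs.get i ^ e i) • m) := by
    rw [smul_smul, hc, ← Finset.prod_mul_distrib, LCaux.list_prod_eq_prod, ← Finset.prod_pow]
    congr 1
    refine Finset.prod_congr rfl fun i _ => ?_
    rw [← pow_add, Nat.sub_add_cancel (he i)]
  have h2 : c • ((∏ i, xs.get i ^ e i) • m) ∈
      (Ideal.span {c} * Ideal.span (Set.range fun i => xs.get i ^ (e i + 1))) •
        (⊤ : Submodule R M) := by
    rw [← Ideal.smul_eq_mul, Submodule.smul_assoc, Submodule.ideal_span_singleton_smul]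
    exact Submodule.smul_mem_pointwise_smul _ _ _ hm
  have hle : Ideal.span {c} * Ideal.span (Set.range fun i => xs.get i ^ (e i + 1)) ≤
      Ideal.span ((· ^ (A + 1)) '' {x | x ∈ xs}) := by
    rw [Ideal.span_mul_span', Ideal.span_le]
    rintro z ⟨c', hc', w, hw, rfl⟩
    rw [Set.mem_singleton_iff] at hc'
    obtain ⟨j, rfl⟩ := hw
    subst hc'
    have hAe : A - e j + (e j + 1) = A + 1 := by
      have := he j; omega
    have hz' : c * xs.get j ^ (e j + 1) =
        (∏ i ∈ Finset.univ.erase j, xs.get i ^ (A - e i)) * xs.get j ^ (A + 1) := by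
      rw [hc, ← Finset.prod_erase_mul Finset.univ _ (Finset.mem_univ j), mul_assoc, ← pow_add,
        hAe]
    change c * xs.get j ^ (e j + 1) ∈ _
    rw [hz']
    exact Ideal.mul_mem_left _ _
      (Ideal.subset_span ⟨xs.get j, List.get_mem xs j, rfl⟩)
  rw [h1]
  exact Submodule.smul_mono_left hle h2

end Helpers

section Main

variable {R : Type*} [CommRing R] [IsNoetherianRing R]
variable {M : Type*} [AddCommGroup M] [Module R M] [Module.Finite R M]

/-- Key lemma: elements killed by a power of the head lie in `x₀ M`. -/
lemma LCaux.ker_pow_le_span_head_smul_top {x0 : R} {tl : List R}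
    (hjac : ∀ x ∈ x0 :: tl, x ∈ Ideal.jacobson (⊥ : Ideal R))
    (h : limitClosure M (x0 :: tl) = Ideal.span {x | x ∈ x0 :: tl} • ⊤)
    (k : ℕ) (m : M) (hm : x0 ^ k • m = 0) :
    m ∈ Ideal.span {x0} • (⊤ : Submodule R M) := by
  classical
  set t := tl.length with ht
  set y : Fin t → R := tl.get with hy
  set K := Ideal.span {a | a ∈ tl} with hK
  set mon : (Fin t → ℕ) → R := fun e => ∏ i, y i ^ e i with hmon
  have hI : Ideal.span {x | x ∈ x0 :: tl} = Ideal.span {x0} ⊔ K := by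
    rw [hK, show {x | x ∈ x0 :: tl} = insert x0 {a | a ∈ tl} from
      Set.ext fun a => List.mem_cons, Ideal.span_insert]
  -- monomials of degree n lie in K^n
  have hKn : ∀ n : ℕ,
      Ideal.span (mon '' ↑(Finset.Nat.antidiagonalTuple t n)) ≤ K ^ n := by
    intro n
    rw [Ideal.span_le]
    rintro z ⟨e, he, rfl⟩
    have he' : ∑ i, e i = n := Finset.Nat.mem_antidiagonalTuple.mp he
    have hmem : ∀ i ∈ Finset.univ, y i ^ e i ∈ K ^ e i := fun i _ =>
      Ideal.pow_mem_pow (Ideal.subset_span (show tl.get i ∈ {a | a ∈ tl} from List.get_mem tl i)) _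
    have := Ideal.prod_mem_prod hmem
    rwa [Finset.prod_pow_eq_pow_sum, he'] at this
  -- the main induction
  have key : ∀ n : ℕ, m ∈ Ideal.span {x0} • (⊤ : Submodule R M) ⊔
      Ideal.span (mon '' ↑(Finset.Nat.antidiagonalTuple t n)) • ⊤ := by
    intro n
    induction n with
    | zero =>
      have h1 : (1 : R) ∈ Ideal.span (mon '' ↑(Finset.Nat.antidiagonalTuple t 0)) :=
        Ideal.subset_span ⟨0, by simp [Finset.Nat.mem_antidiagonalTuple], by simp [hmon]⟩
      have h2 : Ideal.span (mon '' ↑(Finset.Nat.antidiagonalTuple t 0)) = ⊤ :=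
        (Ideal.eq_top_iff_one _).mpr h1
      rw [h2, Submodule.top_smul]
      exact Submodule.mem_sup_right trivial
    | succ n ih =>
      obtain ⟨p, hp, u, hu, hmpu⟩ := Submodule.mem_sup.mp ih
      obtain ⟨a, rfl⟩ := LCaux.mem_span_singleton_smul_top.mp hp
      obtain ⟨b, rfl⟩ := LCaux.exists_sum_of_mem_span_image_smul_top _ _ _ hu
      -- every coefficient lies in (x₀, tl)M
      have hb : ∀ e0 ∈ Finset.Nat.antidiagonalTuple t n,
          b e0 ∈ Ideal.span {x | x ∈ x0 :: tl} • (⊤ : Submodule R M) := by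
        intro e0 he0
        set H := Ideal.span (insert (x0 ^ (k + 1))
          (Set.range fun i => y i ^ (e0 i + 1))) with hH
        have hcolon : (x0 ^ k * mon e0) • b e0 ∈ H • (⊤ : Submodule R M) := by
          have h0 : x0 ^ k • (x0 • a + ∑ e ∈ Finset.Nat.antidiagonalTuple t n,
              mon e • b e) = 0 := by rw [hmpu]; exact hm
          rw [smul_add, Finset.smul_sum] at h0
          have hsplit : (x0 ^ k * mon e0) • b e0
              = -(x0 ^ (k + 1) • a) -
                ∑ e ∈ (Finset.Nat.antidiagonalTuple t n).erase e0,
                  (x0 ^ k * mon e) • b e := by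
            have hsum : (x0 ^ k * mon e0) • b e0 +
                ∑ e ∈ (Finset.Nat.antidiagonalTuple t n).erase e0,
                  (x0 ^ k * mon e) • b e
                = ∑ e ∈ Finset.Nat.antidiagonalTuple t n, (x0 ^ k * mon e) • b e := by
              exact Finset.add_sum_erase _ (fun e => (x0 ^ k * mon e) • b e) he0
            have h0' : x0 ^ (k + 1) • a +
                ∑ e ∈ Finset.Nat.antidiagonalTuple t n, (x0 ^ k * mon e) • b e = 0 := by
              rw [← h0]
              congr 1
              · rw [smul_smul, ← pow_succ]
              · exact Finset.sum_congr rfl fun e _ => by rw [smul_smul]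
            rw [← hsum] at h0'
            exact eq_sub_of_add_eq (eq_neg_of_add_eq_zero_right h0')
          rw [hsplit]
          refine Submodule.sub_mem _ (Submodule.neg_mem _ ?_) (Submodule.sum_mem _ ?_)
          · exact Submodule.smul_mem_smul (Ideal.subset_span (Set.mem_insert _ _)) trivial
          · intro e he
            obtain ⟨hne, heE⟩ := Finset.mem_erase.mp he
            have hex : ∃ i, e0 i + 1 ≤ e i := by
              by_contra hcon
              push_neg at hcon
              refine hne (funext fun i => ?_)
              have hsum : ∑ i, e i = ∑ i, e0 i := by
                rw [Finset.Nat.mem_antidiagonalTuple.mp heE,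
                  Finset.Nat.mem_antidiagonalTuple.mp he0]
              exact ((Finset.sum_eq_sum_iff_of_le fun i _ =>
                Nat.lt_succ_iff.mp (hcon i)).mp hsum i (Finset.mem_univ i))
            obtain ⟨i, hi⟩ := hex
            have hdvd : y i ^ (e0 i + 1) ∣ mon e :=
              dvd_trans (pow_dvd_pow _ hi)
                (Finset.dvd_prod_of_mem (fun j => y j ^ e j) (Finset.mem_univ i))
            obtain ⟨c, hc⟩ := hdvd
            have hmemH : x0 ^ k * mon e ∈ H := by
              have hgen : y i ^ (e0 i + 1) ∈ H :=
                Ideal.subset_span (Set.mem_insert_of_mem _ ⟨i, rfl⟩)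
              have : x0 ^ k * mon e = x0 ^ k * c * y i ^ (e0 i + 1) := by
                rw [hc]; ring
              rw [this]
              exact Ideal.mul_mem_left _ _ hgen
            exact Submodule.smul_mem_smul hmemH trivial
        -- apply the generalized colon property for the full list
        have hprod : (∏ i : Fin (t + 1), (x0 :: tl).get i ^ (Fin.cons k e0 : Fin (t + 1) → ℕ) i)
            = x0 ^ k * mon e0 := by
          rw [Fin.prod_univ_succ]
          simp [hmon, hy]
        have hfun : (fun i : Fin (t + 1) =>
              (x0 :: tl).get i ^ ((Fin.cons k e0 : Fin (t + 1) → ℕ) i + 1))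
            = Fin.cons (x0 ^ (k + 1)) (fun i => y i ^ (e0 i + 1)) := by
          funext i
          refine Fin.cases ?_ (fun j => ?_) i <;> simp [hy]
        have hrange : (Set.range fun i : Fin (t + 1) =>
              (x0 :: tl).get i ^ ((Fin.cons k e0 : Fin (t + 1) → ℕ) i + 1))
            = insert (x0 ^ (k + 1)) (Set.range fun i => y i ^ (e0 i + 1)) := by
          rw [hfun, Fin.range_cons]
        have hgoal : ((∏ i : Fin (t + 1),
              (x0 :: tl).get i ^ (Fin.cons k e0 : Fin (t + 1) → ℕ) i) • b e0) ∈
            Ideal.span (Set.range fun i : Fin (t + 1) =>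
              (x0 :: tl).get i ^ ((Fin.cons k e0 : Fin (t + 1) → ℕ) i + 1)) •
              (⊤ : Submodule R M) := by
          rw [hprod, hrange]
          exact hcolon
        exact LCaux.mem_smul_of_mixed_powers h (Fin.cons k e0) _ hgoal
      -- reassemble
      rw [← hmpu]
      refine Submodule.add_mem _
        (Submodule.mem_sup_left (LCaux.mem_span_singleton_smul_top.mpr ⟨a, rfl⟩))
        (Submodule.sum_mem _ fun e he => ?_)
      have hb' := hb e he
      rw [hI, Submodule.sup_smul] at hb'
      obtain ⟨v, hv, w, hw, hbvw⟩ := Submodule.mem_sup.mp hb'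
      rw [← hbvw, smul_add]
      refine Submodule.add_mem _ (Submodule.mem_sup_left ?_) (Submodule.mem_sup_right ?_)
      · obtain ⟨v', rfl⟩ := LCaux.mem_span_singleton_smul_top.mp hv
        exact LCaux.mem_span_singleton_smul_top.mpr ⟨mon e • v', smul_comm _ _ _⟩
      · have h1 : mon e • w ∈ (Ideal.span {mon e} * K) • (⊤ : Submodule R M) := by
          rw [← Ideal.smul_eq_mul, Submodule.smul_assoc, Submodule.ideal_span_singleton_smul]
          exact Submodule.smul_mem_pointwise_smul _ _ _ hw
        refine Submodule.smul_mono_left ?_ h1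
        rw [hK, Ideal.span_mul_span', Ideal.span_le]
        rintro z ⟨c', hc', w', hw', rfl⟩
        rw [Set.mem_singleton_iff] at hc'
        subst hc'
        obtain ⟨i, rfl⟩ := List.mem_iff_get.mp hw'
        exact LCaux.mon_mul_mem y he i
  -- push to the quotient and use Krull's intersection theorem
  set P := Ideal.span {x0} • (⊤ : Submodule R M) with hP
  have hq : ∀ n : ℕ, P.mkQ m ∈ K ^ n • (⊤ : Submodule R (M ⧸ P)) := by
    intro n
    have h1 : m ∈ P ⊔ K ^ n • ⊤ :=
      Submodule.mem_sup.mpr <| by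
        obtain ⟨p, hp, u, hu, hpu⟩ := Submodule.mem_sup.mp (key n)
        exact ⟨p, hp, u, Submodule.smul_mono_left (hKn n) hu, hpu⟩
    exact LCaux.mkQ_mem_smul_top_of_mem_sup h1
  have hKjac : K ≤ Ideal.jacobson ⊥ := by
    rw [hK, Ideal.span_le]
    intro a ha
    exact hjac a (List.mem_cons_of_mem _ ha)
  have hkrull := LCaux.krull_jacobson (M := M ⧸ P) K hKjac
  have hbot : P.mkQ m ∈ (⊥ : Submodule R (M ⧸ P)) := by
    rw [← hkrull]
    exact Submodule.mem_iInf _ |>.mpr hq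
  rw [Submodule.mem_bot] at hbot
  have := (Submodule.Quotient.mk_eq_zero P).mp hbot
  exact this

/-- The head of the list acts injectively. -/
lemma LCaux.isSMulRegular_head {x0 : R} {tl : List R}
    (hjac : ∀ x ∈ x0 :: tl, x ∈ Ideal.jacobson (⊥ : Ideal R))
    (h : limitClosure M (x0 :: tl) = Ideal.span {x | x ∈ x0 :: tl} • ⊤) :
    IsSMulRegular M x0 := by
  have hker : ∀ m : M, x0 • m = 0 → m = 0 := by
    intro m hm0
    have hall : ∀ n : ℕ, m ∈ Ideal.span {x0} ^ n • (⊤ : Submodule R M) := by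
      intro n
      induction n with
      | zero => rw [pow_zero, Ideal.one_eq_top, Submodule.top_smul]; trivial
      | succ n ih =>
        rw [Ideal.span_singleton_pow] at ih
        obtain ⟨m', rfl⟩ := LCaux.mem_span_singleton_smul_top.mp ih
        have hpow : x0 ^ (n + 1) • m' = 0 := by
          rw [pow_succ', mul_smul]
          exact hm0
        obtain ⟨m'', rfl⟩ := LCaux.mem_span_singleton_smul_top.mp
          (LCaux.ker_pow_le_span_head_smul_top hjac h (n + 1) m' hpow)
        rw [Ideal.span_singleton_pow]
        exact LCaux.mem_span_singleton_smul_top.mpr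
          ⟨m'', by rw [smul_smul, ← pow_succ]⟩
    have hx0jac : Ideal.span {x0} ≤ Ideal.jacobson ⊥ := by
      rw [Ideal.span_le]
      rintro a ha
      rw [Set.mem_singleton_iff] at ha
      subst ha
      exact hjac _ List.mem_cons_self
    have hkrull := LCaux.krull_jacobson (M := M) (Ideal.span {x0}) hx0jac
    have : m ∈ (⊥ : Submodule R M) := by
      rw [← hkrull]
      exact Submodule.mem_iInf _ |>.mpr hall
    simpa using this
  intro a b hab
  have := hker (a - b) (by rw [smul_sub]; rw [sub_eq_zero]; exact hab)
  exact sub_eq_zero.mp this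

/-- The limit closure condition passes to the quotient by the head. -/
lemma LCaux.limitClosure_quot {x0 : R} {tl : List R}
    (h : limitClosure M (x0 :: tl) = Ideal.span {x | x ∈ x0 :: tl} • ⊤) :
    limitClosure (QuotSMulTop x0 M) tl =
      Ideal.span {x | x ∈ tl} • (⊤ : Submodule R (QuotSMulTop x0 M)) := by
  classical
  set P : Submodule R M := x0 • ⊤ with hPdef
  have hPspan : Ideal.span {x0} • (⊤ : Submodule R M) = P :=
    Submodule.ideal_span_singleton_smul _ _
  apply le_antisymm
  · rw [limitClosure]
    refine iSup_le fun n => ?_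
    intro mq hmq
    obtain ⟨m, rfl⟩ := P.mkQ_surjective mq
    rw [Submodule.mem_comap] at hmq
    set J := Ideal.span ((· ^ (n + 1)) '' {x | x ∈ tl}) with hJ
    have h1 : P.mkQ (tl.prod ^ n • m) ∈ J • (⊤ : Submodule R (M ⧸ P)) := by
      simpa using hmq
    have h2 : J • (⊤ : Submodule R (M ⧸ P)) = Submodule.map P.mkQ (J • ⊤) := by
      rw [Submodule.map_smul'', Submodule.map_top, Submodule.range_mkQ]
    rw [h2] at h1
    obtain ⟨w, hw, hw2⟩ := h1
    have h3 : tl.prod ^ n • m - w ∈ P := (Submodule.Quotient.eq P).mp hw2.symm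
    obtain ⟨u, -, hu0⟩ := h3
    have hu : x0 • u = tl.prod ^ n • m - w := hu0
    have hfull : (x0 :: tl).prod ^ n • m ∈
        Ideal.span ((· ^ (n + 1)) '' {x | x ∈ x0 :: tl}) • (⊤ : Submodule R M) := by
      have hsplit : (x0 :: tl).prod ^ n • m = x0 ^ n • w + x0 ^ (n + 1) • u := by
        rw [List.prod_cons, mul_pow, mul_smul]
        rw [show tl.prod ^ n • m = w + x0 • u by rw [hu]; abel]
        rw [smul_add, smul_smul, ← pow_succ]
      rw [hsplit]
      refine Submodule.add_mem _ ?_ ?_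
      · refine Submodule.smul_mem _ _ (Submodule.smul_mono_left ?_ hw)
        exact Ideal.span_mono (Set.image_mono fun a ha => List.mem_cons_of_mem _ ha)
      · exact Submodule.smul_mem_smul
          (Ideal.subset_span ⟨x0, List.mem_cons_self, rfl⟩) trivial
    have hmem : m ∈ Ideal.span {x | x ∈ x0 :: tl} • (⊤ : Submodule R M) :=
      LCaux.mem_smul_of_pow_prod_smul_mem h hfull
    have h4 := Submodule.mem_map_of_mem (f := P.mkQ) hmem
    rw [Submodule.map_smul'', Submodule.map_top, Submodule.range_mkQ] at h4
    have hle : Ideal.span {x | x ∈ x0 :: tl} • (⊤ : Submodule R (M ⧸ P)) ≤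
        Ideal.span {x | x ∈ tl} • ⊤ := by
      rw [show {x | x ∈ x0 :: tl} = insert x0 {a | a ∈ tl} from
        Set.ext fun a => List.mem_cons, Ideal.span_insert, Submodule.sup_smul]
      refine sup_le ?_ le_rfl
      rw [Submodule.ideal_span_singleton_smul]
      rintro _ ⟨v, -, rfl⟩
      obtain ⟨v', rfl⟩ := P.mkQ_surjective v
      show x0 • P.mkQ v' ∈ _
      have heq : x0 • P.mkQ v' = P.mkQ (x0 • v') := rfl
      rw [heq]
      have hv' : x0 • v' ∈ P := ⟨v', trivial, rfl⟩
      rw [show P.mkQ (x0 • v') = 0 from (Submodule.Quotient.mk_eq_zero P).mpr hv']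
      exact Submodule.zero_mem _
    exact hle h4
  · rw [limitClosure]
    refine le_trans ?_ (le_iSup _ 0)
    intro mq hmq
    rw [Submodule.mem_comap]
    have himg : ((· ^ (0 + 1)) '' {x | x ∈ tl}) = {x | x ∈ tl} := by
      ext a; simp
    rw [himg]
    simpa using hmq

/-- Main auxiliary result, by induction on the list. -/
theorem LCaux.isRegular_aux (xs : List R) :
    ∀ {N : Type*} [AddCommGroup N] [Module R N] [Module.Finite R N],
    (∀ x ∈ xs, x ∈ Ideal.jacobson (⊥ : Ideal R)) →
    (Ideal.span {x | x ∈ xs} • (⊤ : Submodule R N) ≠ ⊤) →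
    (limitClosure N xs = Ideal.span {x | x ∈ xs} • (⊤ : Submodule R N)) →
    RingTheory.Sequence.IsRegular N xs := by
  induction xs with
  | nil =>
    intro N _ _ _ _hjac hne _h
    have : Nontrivial N := by
      rcases subsingleton_or_nontrivial N with hs | hn
      · refine absurd ?_ hne
        refine le_antisymm le_top ?_
        intro x _
        rw [Subsingleton.elim x (0 : N)]
        exact Submodule.zero_mem _
      · exact hn
    exact RingTheory.Sequence.IsRegular.nil R N
  | cons x0 tl ih =>
    intro N _ _ _ hjac hne h
    refine RingTheory.Sequence.IsRegular.cons (LCaux.isSMulRegular_head hjac h) ?_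
    have hne' : Ideal.span {x | x ∈ tl} • (⊤ : Submodule R (QuotSMulTop x0 N)) ≠ ⊤ := by
      intro heq
      have h2 : Ideal.span {x | x ∈ tl} • (⊤ : Submodule R (QuotSMulTop x0 N))
          = Submodule.map (x0 • ⊤ : Submodule R N).mkQ (Ideal.span {x | x ∈ tl} • ⊤) := by
        rw [Submodule.map_smul'', Submodule.map_top, Submodule.range_mkQ]
      have h3 : (x0 • ⊤ : Submodule R N) ⊔ Ideal.span {x | x ∈ tl} • ⊤ = ⊤ := by
        have hc := congrArg (Submodule.comap (x0 • ⊤ : Submodule R N).mkQ) (h2.symm.trans heq)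
        rwa [Submodule.comap_map_mkQ, Submodule.comap_top] at hc
      apply hne
      have hle : (x0 • ⊤ : Submodule R N) ⊔ Ideal.span {x | x ∈ tl} • ⊤ ≤
          Ideal.span {x | x ∈ x0 :: tl} • (⊤ : Submodule R N) := by
        refine sup_le ?_ (Submodule.smul_mono_left (Ideal.span_mono fun a ha =>
          List.mem_cons_of_mem _ ha))
        rw [← Submodule.ideal_span_singleton_smul]
        refine Submodule.smul_mono_left (Ideal.span_mono fun a ha => ?_)
        rw [Set.mem_singleton_iff] at ha
        subst ha
        exact List.mem_cons_self
      exact le_antisymm le_top (h3.symm.trans_le hle)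
    exact ih (fun x hx => hjac x (List.mem_cons_of_mem _ hx)) hne'
      (LCaux.limitClosure_quot h)

end Main

/-- Let `x₁, …, x_r` be elements of the Jacobson radical of a Noetherian
ring `R` and `M` a finitely generated `R`-module with `(x₁,…,x_r)M ≠ M`. If the limit closure
of `{x₁,…,x_r}` in `M` equals `(x₁,…,x_r)M`, then `x₁,…,x_r` is a regular sequence on `M`. -/
theorem isRegular_of_limitClosure_eq {R : Type*} [CommRing R] [IsNoetherianRing R]
    {M : Type*} [AddCommGroup M] [Module R M] [Module.Finite R M]
    (xs : List R) (hjac : ∀ x ∈ xs, x ∈ Ideal.jacobson (⊥ : Ideal R))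
    (hne : Ideal.span {x | x ∈ xs} • (⊤ : Submodule R M) ≠ ⊤)
    (h : limitClosure M xs = Ideal.span {x | x ∈ xs} • (⊤ : Submodule R M)) :
    RingTheory.Sequence.IsRegular M xs :=
  LCaux.isRegular_aux xs hjac hne h
end

section
/- Let x_1,...,x_r be elements of the Jacobson radical of a Noetherian ring R and M a finitely generated R-module. Suppose the limit closure of {x_1,...,x_r} in M equals (x_1,...,x_r)M. Then the limit closure of {x_1,...,x_{r-1}} in M equals (x_1,...,x_{r-1})M. -/
open Pointwise

namespace Submodule

variable {R M : Type*} [CommRing R] [AddCommGroup M] [Module R M]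

/-- The saturation `N :_M y^∞` of `N` with respect to `y`. -/
def saturation (y : R) (N : Submodule R M) : Submodule R M where
  carrier := {m | ∃ k : ℕ, y ^ k • m ∈ N}
  add_mem' := by
    rintro m m' ⟨k, hk⟩ ⟨k', hk'⟩
    have hsum : y ^ (k + k') • (m + m') = y ^ k' • y ^ k • m + y ^ k • y ^ k' • m' := by
      rw [smul_add, ← mul_smul, ← mul_smul, ← pow_add, ← pow_add, add_comm k']
    exact ⟨k + k', hsum ▸ N.add_mem (N.smul_mem _ hk) (N.smul_mem _ hk')⟩
  zero_mem' := ⟨0, by simp⟩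
  smul_mem' := by
    rintro r m ⟨k, hk⟩
    exact ⟨k, smul_comm (y ^ k) r m ▸ N.smul_mem r hk⟩

variable {y : R} {N : Submodule R M} {m : M}

theorem le_saturation : N ≤ N.saturation y :=
  fun m hm => ⟨0, by simpa using hm⟩

theorem mem_saturation_of_smul_mem (h : y • m ∈ N.saturation y) : m ∈ N.saturation y := by
  obtain ⟨k, hk⟩ := h
  exact ⟨k + 1, by rwa [pow_succ, mul_smul]⟩

theorem le_of_le_sup_span_singleton_smul_top {S P : Submodule R M} (hP : P.FG)
    (hy : y ∈ Ideal.jacobson ⊥) (hSP : S ≤ P) (hcancel : ∀ m, y • m ∈ P → m ∈ P)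
    (hle : P ≤ S ⊔ Ideal.span {y} • ⊤) : P ≤ S := by
  refine le_of_le_smul_of_le_jacobson_bot hP (Ideal.span_singleton_le_iff_mem _ |>.mpr hy) ?_
  intro w hw
  obtain ⟨s, hs, t, ht, rfl⟩ := mem_sup.mp (hle hw)
  rw [ideal_span_singleton_smul, mem_smul_pointwise_iff_exists] at ht
  obtain ⟨m, -, rfl⟩ := ht
  have hm : m ∈ P := hcancel m <| by
    simpa using P.sub_mem hw (hSP hs)
  exact mem_sup.mpr ⟨s, hs, y • m, smul_mem_smul (Ideal.mem_span_singleton_self y) hm, rfl⟩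

end Submodule

section LimitClosure

variable {R M : Type*} [CommRing R] [AddCommGroup M] [Module R M]

theorem span_singleton_prod_mul_span_pow_le (xs : List R) (n : ℕ) :
    Ideal.span {xs.prod} * Ideal.span ((· ^ (n + 1)) '' {x | x ∈ xs}) ≤
      Ideal.span ((· ^ (n + 2)) '' {x | x ∈ xs}) := by
  rw [Ideal.span_mul_span', Ideal.span_le]
  rintro _ ⟨_, rfl, _, ⟨x, hx, rfl⟩, rfl⟩
  refine Ideal.mem_of_dvd _ ?_ (Ideal.subset_span ⟨x, hx, rfl⟩)
  change x ^ (n + 2) ∣ xs.prod * x ^ (n + 1)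
  rw [pow_succ, mul_comm xs.prod]
  exact mul_dvd_mul_left _ (List.dvd_prod hx)

variable (M) in
/-- The `n`-th term `(x^{n+1})M :_M (x₁ ⋯ x_r)^n` of the union defining the limit closure. -/
noncomputable def limitClosureStage (xs : List R) (n : ℕ) : Submodule R M :=
  Submodule.comap (LinearMap.lsmul R M (xs.prod ^ n))
    (Ideal.span ((· ^ (n + 1)) '' {x | x ∈ xs}) • (⊤ : Submodule R M))

theorem mem_limitClosureStage {xs : List R} {n : ℕ} {z : M} :
    z ∈ limitClosureStage M xs n ↔
      xs.prod ^ n • z ∈ Ideal.span ((· ^ (n + 1)) '' {x | x ∈ xs}) • (⊤ : Submodule R M) :=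
  Iff.rfl

theorem limitClosureStage_mono (xs : List R) : Monotone (limitClosureStage M xs) := by
  refine monotone_nat_of_le_succ fun n z hz => ?_
  rw [mem_limitClosureStage, pow_succ', mul_smul]
  refine Submodule.smul_mono_left (span_singleton_prod_mul_span_pow_le xs n) ?_
  rw [Submodule.mul_smul]
  exact Submodule.smul_mem_smul (Ideal.mem_span_singleton_self _) hz

theorem mem_limitClosure {xs : List R} {z : M} :
    z ∈ limitClosure M xs ↔ ∃ n, z ∈ limitClosureStage M xs n :=
  Submodule.mem_iSup_of_directed _ (limitClosureStage_mono xs).directed_le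

theorem span_smul_top_le_limitClosure (xs : List R) :
    Ideal.span {x | x ∈ xs} • (⊤ : Submodule R M) ≤ limitClosure M xs :=
  fun z hz => mem_limitClosure.mpr ⟨0, by simpa [limitClosureStage] using hz⟩

theorem saturation_limitClosure_le_limitClosure_append (ys : List R) (y : R) :
    (limitClosure M ys).saturation y ≤ limitClosure M (ys ++ [y]) := by
  rintro m ⟨k, hk⟩
  obtain ⟨n, hn⟩ := mem_limitClosure.mp hk
  have hnk := mem_limitClosureStage.mp (limitClosureStage_mono ys (Nat.le_add_right n k) hn)
  refine mem_limitClosure.mpr ⟨n + k, ?_⟩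
  have hexpand : (ys ++ [y]).prod ^ (n + k) • m = y ^ n • ys.prod ^ (n + k) • y ^ k • m := by
    simp only [List.prod_append, List.prod_singleton, ← mul_smul]
    ring_nf
  rw [mem_limitClosureStage, hexpand]
  refine Submodule.smul_mem _ _ (Submodule.smul_mono_left ?_ hnk)
  exact Ideal.span_mono (Set.image_mono fun x hx => List.mem_append_left _ hx)

end LimitClosure

/-- Let `x₁, …, x_r` be elements of the Jacobson radical of a Noetherian
ring `R` and `M` a finitely generated `R`-module. If the limit closure of `{x₁,…,x_r}` in `M`
equals `(x₁,…,x_r)M`, then the limit closure of `{x₁,…,x_{r-1}}` in `M` equals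
`(x₁,…,x_{r-1})M`. -/
theorem limitClosure_dropLast {R : Type*} [CommRing R] [IsNoetherianRing R]
    {M : Type*} [AddCommGroup M] [Module R M] [Module.Finite R M]
    (xs : List R) (hjac : ∀ x ∈ xs, x ∈ Ideal.jacobson (⊥ : Ideal R))
    (h : limitClosure M xs = Ideal.span {x | x ∈ xs} • (⊤ : Submodule R M)) :
    limitClosure M xs.dropLast = Ideal.span {x | x ∈ xs.dropLast} • (⊤ : Submodule R M) := by
  rcases xs.eq_nil_or_concat with rfl | ⟨ys, y, rfl⟩
  · simpa using h
  simp only [List.concat_eq_append] at hjac h ⊢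
  rw [List.dropLast_concat]
  set S := Ideal.span {x | x ∈ ys} • (⊤ : Submodule R M)
  set P := (limitClosure M ys).saturation y
  have hSP : S ≤ P := (span_smul_top_le_limitClosure ys).trans Submodule.le_saturation
  have hPle : P ≤ S ⊔ Ideal.span {y} • ⊤ := by
    have hspan : {x | x ∈ ys ++ [y]} = {x | x ∈ ys} ∪ {y} := by ext; simp [or_comm]
    rw [← Submodule.sup_smul, ← Ideal.span_union, ← hspan, ← h]
    exact saturation_limitClosure_le_limitClosure_append ys y
  have hPS : P ≤ S :=
    Submodule.le_of_le_sup_span_singleton_smul_top (IsNoetherian.noetherian P)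
      (hjac y (by simp)) hSP (fun _ => Submodule.mem_saturation_of_smul_mem) hPle
  exact le_antisymm (Submodule.le_saturation.trans hPS) (span_smul_top_le_limitClosure ys)
end

section
/- Let x_1,...,x_r be elements of the Jacobson radical of a Noetherian ring R and M a finitely generated R-module. Suppose the limit closure of {x_1,...,x_r} in M equals (x_1,...,x_r)M. Then x_r is a nonzerodivisor on M/(x_1,...,x_{r-1})M. -/
/-! Write `N = (x₁, …, x_{r-1})M`. If `x_rⁿ m ∈ N`, then `(x₁⋯x_r)ⁿ m ∈ (x₁ⁿ⁺¹, …, x_rⁿ⁺¹)M`, because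
`(x₁⋯x_{r-1})ⁿ xᵢ` is a multiple of `xᵢⁿ⁺¹`; so `m` lies in the limit closure, which is `N + x_r M`.
Hence every `x_r`-power-torsion element of `M/N` has the form `x_r w`, and then `w` is itself
`x_r`-power torsion. The torsion submodule `T` thus satisfies `T = x_r T`, and Nakayama gives `T = 0`. -/

open Submodule

theorem Ideal.span_singleton_prod_pow_mul_span_le {R : Type*} [CommRing R] (ys : List R) (n : ℕ) :
    Ideal.span {ys.prod ^ n} * Ideal.span {y | y ∈ ys} ≤
      Ideal.span ((· ^ (n + 1)) '' {y | y ∈ ys}) := by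
  rw [Ideal.span_mul_span', Ideal.span_le]
  rintro _ ⟨_, rfl, y, hy, rfl⟩
  obtain ⟨c, hc⟩ := List.dvd_prod hy
  have hyc : ys.prod ^ n * y = y ^ (n + 1) * c ^ n := by rw [hc]; ring
  simp only [hyc]
  exact Ideal.mul_mem_right _ _ (Ideal.subset_span ⟨y, hy, rfl⟩)

theorem mem_limitClosure_append_of_pow_smul_mem {R M : Type*} [CommRing R] [AddCommGroup M]
    [Module R M] (ys : List R) (x : R) {m : M} {n : ℕ}
    (hm : x ^ n • m ∈ Ideal.span {y | y ∈ ys} • (⊤ : Submodule R M)) :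
    m ∈ limitClosure M (ys ++ [x]) := by
  refine mem_iSup_of_mem n ?_
  rw [mem_comap, LinearMap.lsmul_apply, List.prod_append, List.prod_singleton, mul_pow, mul_smul]
  have hmem := smul_mem_smul (Ideal.mem_span_singleton_self (ys.prod ^ n)) hm
  rw [← Submodule.mul_smul] at hmem
  refine smul_mono_left ((Ideal.span_singleton_prod_pow_mul_span_le ys n).trans
    (Ideal.span_mono (Set.image_mono ?_))) hmem
  exact fun z hz => List.mem_append_left _ hz

theorem isSMulRegular_of_torsion'_powers_le_smul_top {R Q : Type*} [CommRing R]
    [AddCommGroup Q] [Module R Q] [IsNoetherian R Q] {x : R} (hx : x ∈ (⊥ : Ideal R).jacobson)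
    (h : torsion' R Q (Submonoid.powers x) ≤ Ideal.span {x} • ⊤) : IsSMulRegular Q x := by
  set K := torsion' R Q (Submonoid.powers x)
  have hK : K ≤ Ideal.span {x} • K := by
    intro q hq
    obtain ⟨w, -, rfl⟩ := (mem_smul_pointwise_iff_exists _ _ _).mp
      (ideal_span_singleton_smul x (⊤ : Submodule R Q) ▸ h hq)
    refine smul_mem_smul (Ideal.mem_span_singleton_self x) ?_
    obtain ⟨⟨_, n, rfl⟩, hn⟩ := hq
    refine ⟨⟨_, n + 1, rfl⟩, ?_⟩
    change x ^ n • x • w = 0 at hn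
    change x ^ (n + 1) • w = 0
    rwa [pow_succ, mul_smul]
  have hK0 : K = ⊥ := eq_bot_of_le_smul_of_le_jacobson_bot _ K (IsNoetherian.noetherian K) hK
    (by rwa [Ideal.span_singleton_le_iff_mem])
  refine isSMulRegular_iff_right_eq_zero_of_smul.mpr fun q hq => ?_
  have hqK : q ∈ K := ⟨⟨x, Submonoid.mem_powers x⟩, hq⟩
  rwa [hK0, mem_bot] at hqK

/-- Let `x₁, …, x_r` (given as `ys ++ [x]`) be elements of the Jacobson
radical of a Noetherian ring `R` and `M` a finitely generated `R`-module. If the limit closure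
of `{x₁,…,x_r}` in `M` equals `(x₁,…,x_r)M`, then `x_r` is a nonzerodivisor on
`M/(x₁,…,x_{r-1})M`. -/
theorem isSMulRegular_last_of_limitClosure_eq {R : Type*} [CommRing R] [IsNoetherianRing R]
    {M : Type*} [AddCommGroup M] [Module R M] [Module.Finite R M]
    (ys : List R) (x : R) (hjac : ∀ y ∈ ys ++ [x], y ∈ Ideal.jacobson (⊥ : Ideal R))
    (h : limitClosure M (ys ++ [x]) =
      Ideal.span {z | z ∈ ys ++ [x]} • (⊤ : Submodule R M)) :
    IsSMulRegular (M ⧸ (Ideal.span {y | y ∈ ys} • (⊤ : Submodule R M))) x := by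
  set N := Ideal.span {y | y ∈ ys} • (⊤ : Submodule R M)
  refine isSMulRegular_of_torsion'_powers_le_smul_top (hjac x (by simp)) ?_
  rintro q ⟨⟨_, n, rfl⟩, hq⟩
  obtain ⟨m, rfl⟩ := N.mkQ_surjective q
  have hm : m ∈ N ⊔ Ideal.span {x} • ⊤ := by
    have hset : {z | z ∈ ys ++ [x]} = {y | y ∈ ys} ∪ {x} := by ext; simp [or_comm]
    rw [← sup_smul, ← Ideal.span_union, ← hset, ← h]
    rw [Submonoid.smul_def, ← map_smul, mkQ_apply, Quotient.mk_eq_zero] at hq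
    exact mem_limitClosure_append_of_pow_smul_mem ys x hq
  have hmQ := mem_map_of_mem (f := N.mkQ) hm
  rwa [Submodule.map_sup, mkQ_map_self, bot_sup_eq, map_smul'', Submodule.map_top, range_mkQ] at hmQ
end

section
/- Let (R,m) be a Noetherian local ring of dimension d and suppose there exists a system of parameters x_1,...,x_d such that the limit closure of {x_1,...,x_d} equals (x_1,...,x_d). Then R is Cohen–Macaulay. -/
open IsLocalRing

/-- A Noetherian local ring is Cohen–Macaulay if it admits a regular sequence, consisting of
elements of the maximal ideal, whose length equals the Krull dimension (depth = dim). -/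
def IsCohenMacaulayLocalRing (R : Type*) [CommRing R] [IsLocalRing R] : Prop :=
  ∃ xs : List R, (∀ x ∈ xs, x ∈ maximalIdeal R) ∧ RingTheory.Sequence.IsRegular R xs ∧
    (xs.length : WithBot (WithTop ℕ)) = ringKrullDim R

namespace LimitClosureAux

variable {R : Type*} [CommRing R] {L : ℕ}

lemma ideal_smul_top (I : Ideal R) : I • (⊤ : Submodule R R) = I := by
  apply le_antisymm
  · exact Submodule.smul_le.mpr fun r hr n _ => by
      simpa [smul_eq_mul] using I.mul_mem_right n hr
  · intro x hx
    simpa [smul_eq_mul] using Submodule.smul_mem_smul hx (Submodule.mem_top (x := (1 : R)))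

lemma prod_pow_mem_span (v : Fin L → R) (n : ℕ) (f : Fin L → ℕ) (j₀ : Fin L)
    (h : n + 1 ≤ f j₀) :
    (∏ j, v j ^ f j) ∈ Ideal.span (Set.range fun j => v j ^ (n + 1)) := by
  have h1 : ∏ j, v j ^ f j
      = ((∏ j ∈ Finset.univ.erase j₀, v j ^ f j) * v j₀ ^ (f j₀ - (n + 1))) * v j₀ ^ (n + 1) := by
    rw [mul_assoc, ← pow_add, Nat.sub_add_cancel h,
      Finset.prod_erase_mul _ _ (Finset.mem_univ j₀)]
  rw [h1]
  exact Ideal.mul_mem_left _ _ (Ideal.subset_span ⟨j₀, rfl⟩)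

/-- Degree-one representation of elements of a span. -/
lemma rep_one (v : Fin L → R) (S : Set (Fin L)) {a : R} (ha : a ∈ Ideal.span (v '' S)) :
    ∃ ψ : MvPolynomial (Fin L) R,
      (∀ β ∈ ψ.support, ∑ j, β j = 1) ∧ MvPolynomial.eval v ψ = a := by
  refine Submodule.span_induction ?_ ?_ ?_ ?_ ha
  · rintro x ⟨j, -, rfl⟩
    classical
    refine ⟨MvPolynomial.X j, ?_, MvPolynomial.eval_X _⟩
    intro β hβ
    rw [MvPolynomial.mem_support_iff, MvPolynomial.coeff_X'] at hβ
    have hβ' : Finsupp.single j 1 = β := by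
      by_contra hne
      exact hβ (if_neg hne)
    subst hβ'
    simp [Finsupp.single_apply]
  · exact ⟨0, by simp, by simp⟩
  · rintro x y - - ⟨φ₁, h₁, e₁⟩ ⟨φ₂, h₂, e₂⟩
    classical
    refine ⟨φ₁ + φ₂, fun β hβ => ?_, by rw [map_add, e₁, e₂]⟩
    rcases Finset.mem_union.mp (MvPolynomial.support_add hβ) with h | h
    · exact h₁ β h
    · exact h₂ β h
  · rintro r x - ⟨φ, h, e⟩
    refine ⟨MvPolynomial.C r * φ, fun β hβ => ?_, by rw [map_mul, MvPolynomial.eval_C, e,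
      smul_eq_mul]⟩
    apply h
    rw [MvPolynomial.mem_support_iff] at hβ ⊢
    intro h0
    exact hβ (by rw [MvPolynomial.coeff_C_mul, h0, mul_zero])

/-- Homogeneous representation of elements of a power of a span. -/
lemma rep_pow (v : Fin L → R) (S : Set (Fin L)) :
    ∀ (k : ℕ) (a : R), a ∈ (Ideal.span (v '' S)) ^ k →
      ∃ φ : MvPolynomial (Fin L) R,
        (∀ β ∈ φ.support, ∑ j, β j = k) ∧ MvPolynomial.eval v φ = a := by
  intro k
  induction k with
  | zero =>
    intro a _
    refine ⟨MvPolynomial.C a, ?_, MvPolynomial.eval_C a⟩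
    intro β hβ
    classical
    rw [MvPolynomial.mem_support_iff] at hβ
    by_cases h0 : β = 0
    · subst h0; simp
    · exact absurd (by rw [MvPolynomial.coeff_C, if_neg (Ne.symm h0)]) hβ
  | succ k ih =>
    intro a ha
    rw [pow_succ] at ha
    refine Submodule.mul_induction_on ha ?_ ?_
    · intro m hm q hq
      obtain ⟨φ, hφ, hφe⟩ := ih m hm
      obtain ⟨ψ, hψ, hψe⟩ := rep_one v S hq
      classical
      refine ⟨φ * ψ, fun β hβ => ?_, by rw [map_mul, hφe, hψe]⟩
      rcases Finset.mem_add.mp (MvPolynomial.support_mul φ ψ hβ) with ⟨β₁, hβ₁, β₂, hβ₂, rfl⟩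
      rw [← hφ β₁ hβ₁, ← hψ β₂ hβ₂, ← Finset.sum_add_distrib]
      simp [Finsupp.add_apply]
    · rintro x y ⟨φ₁, h₁, e₁⟩ ⟨φ₂, h₂, e₂⟩
      classical
      refine ⟨φ₁ + φ₂, fun β hβ => ?_, by rw [map_add, e₁, e₂]⟩
      rcases Finset.mem_union.mp (MvPolynomial.support_add hβ) with h | h
      · exact h₁ β h
      · exact h₂ β h

lemma mono_mem_pow (v : Fin L → R) (i : Fin L) (k : ℕ) (β : Fin L →₀ ℕ)
    (hsupp : ∀ j, j < i → β j = 0) (hdeg : ∑ j, β j = k) :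
    (∏ j, v j ^ β j) ∈ (Ideal.span (v '' {j | i ≤ j})) ^ k := by
  have h1 : ∀ j : Fin L, v j ^ β j ∈ (Ideal.span (v '' {j | i ≤ j})) ^ (β j) := by
    intro j
    by_cases h0 : β j = 0
    · rw [h0, pow_zero, pow_zero, Ideal.one_eq_top]; trivial
    · have hji : i ≤ j := not_lt.mp fun hj => h0 (hsupp j hj)
      have hmem : v j ∈ v '' {t : Fin L | i ≤ t} := ⟨j, hji, rfl⟩
      exact Ideal.pow_mem_pow (Ideal.subset_span hmem) _
  have h2 := Ideal.prod_mem_prod (fun j (_ : j ∈ Finset.univ) => h1 j)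
  rwa [Finset.prod_pow_eq_pow_sum, hdeg] at h2

/-- The key lemma: coefficients of homogeneous representations of elements of
`((x₁,…,x_{i-1}) : x_i^N)` lie in the full ideal, thanks to the limit closure hypothesis. -/
lemma key (v : Fin L → R)
    (hLC : ∀ (n : ℕ) (c : R),
      c * (∏ j, v j) ^ n ∈ Ideal.span (Set.range fun j => v j ^ (n + 1)) →
        c ∈ Ideal.span (Set.range v))
    (i : Fin L) (N k : ℕ) (φ : MvPolynomial (Fin L) R)
    (hφ : ∀ β ∈ φ.support, ∑ j, β j = k)
    (hrel : (MvPolynomial.eval v φ) * v i ^ N ∈ Ideal.span (v '' {j | j < i}))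
    (α₀ : Fin L →₀ ℕ) (hdeg : ∑ j, α₀ j = k) (hsupp : ∀ j, j < i → α₀ j = 0) :
    φ.coeff α₀ ∈ Ideal.span (Set.range v) := by
  classical
  set n := k + N with hn
  set δ : Fin L → ℕ := fun j => if j = i then N else 0 with hδ
  have hα₀le : ∀ j, α₀ j + δ j ≤ n := by
    intro j
    have h1 : α₀ j ≤ k := hdeg ▸ Finset.single_le_sum (f := fun j => α₀ j)
      (fun _ _ => Nat.zero_le _) (Finset.mem_univ j)
    have h2 : δ j ≤ N := by simp only [hδ]; split <;> omega
    omega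
  set E : Fin L → ℕ := fun j => n - (α₀ j + δ j) with hE
  have hEn : ∀ j, E j + (α₀ j + δ j) = n := fun j => Nat.sub_add_cancel (hα₀le j)
  set μ : R := ∏ j, v j ^ E j with hμ
  set Jn : Ideal R := Ideal.span (Set.range fun j => v j ^ (n + 1)) with hJn
  have hviN : v i ^ N = ∏ j, v j ^ δ j := by
    have h0 : (fun j => v j ^ δ j) = fun j => if j = i then v j ^ N else 1 := by
      funext j
      by_cases h : j = i
      · simp [hδ, h]
      · simp [hδ, h]
    rw [h0, Finset.prod_ite_eq' Finset.univ i (fun j => v j ^ N)]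
    simp
  -- combining products
  have hmul : ∀ (c : R) (g : Fin L → ℕ),
      (c * ∏ j, v j ^ g j) * v i ^ N * μ = c * ∏ j, v j ^ (g j + δ j + E j) := by
    intro c g
    have h1 : ∀ j ∈ Finset.univ, v j ^ (g j + δ j + E j) = v j ^ g j * v j ^ δ j * v j ^ E j := by
      intro j _; rw [pow_add, pow_add]
    rw [Finset.prod_congr rfl h1, Finset.prod_mul_distrib, Finset.prod_mul_distrib, ← hviN, hμ]
    ring
  -- every other term of the expansion is in Jn
  have hterm : ∀ β ∈ φ.support, β ≠ α₀ →
      (φ.coeff β * ∏ j, v j ^ β j) * v i ^ N * μ ∈ Jn := by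
    intro β hβ hne
    have hj₀ : ∃ j₀, α₀ j₀ < β j₀ := by
      by_contra hc
      push_neg at hc
      have hsum : ∑ j, β j = ∑ j, α₀ j := by rw [hφ β hβ, hdeg]
      have := (Finset.sum_eq_sum_iff_of_le (fun j _ => hc j)).mp hsum
      exact hne (Finsupp.ext fun j => this j (Finset.mem_univ j))
    obtain ⟨j₀, hj₀⟩ := hj₀
    rw [hmul]
    refine Ideal.mul_mem_left _ _ (prod_pow_mem_span v n _ j₀ ?_)
    have := hEn j₀
    omega
  -- multiples of P-elements are in Jn
  have hP : ∀ p ∈ Ideal.span (v '' {j | j < i}), μ * p ∈ Jn := by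
    intro p hp
    have hle : Ideal.span (v '' {j | j < i}) ≤
        Submodule.comap (LinearMap.mulLeft R μ) Jn := by
      rw [Ideal.span_le]
      rintro x ⟨j, hj, rfl⟩
      simp only [SetLike.mem_coe, Submodule.mem_comap, LinearMap.mulLeft_apply]
      have h1 : μ * v j = ∏ t, v t ^ (E t + if t = j then 1 else 0) := by
        have h2 : ∀ t ∈ Finset.univ,
            v t ^ (E t + if t = j then 1 else 0) = v t ^ E t * (if t = j then v t else 1) := by
          intro t _
          rw [pow_add]
          split <;> simp
        rw [Finset.prod_congr rfl h2, Finset.prod_mul_distrib,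
          Finset.prod_ite_eq' Finset.univ j (fun t => v t), if_pos (Finset.mem_univ j), hμ]
      rw [h1]
      refine prod_pow_mem_span v n _ j ?_
      have h3 := hEn j
      have h4 : α₀ j = 0 := hsupp j hj
      have h5 : δ j = 0 := by
        simp only [hδ]
        rw [if_neg]
        intro hji
        exact absurd (hji ▸ hj) (lt_irrefl i)
      rw [if_pos rfl]
      rw [h4, h5] at h3
      have h6 : E j = n := by simpa using h3
      exact le_of_eq (by rw [h6])
    exact hle hp
  by_cases hα₀ : α₀ ∈ φ.support
  · -- expansion of eval
    have hexp : (MvPolynomial.eval v φ) * v i ^ N * μ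
        = ∑ β ∈ φ.support, (φ.coeff β * ∏ j, v j ^ β j) * v i ^ N * μ := by
      rw [MvPolynomial.eval_eq' v φ, Finset.sum_mul, Finset.sum_mul]
    have hsplit : ∑ β ∈ φ.support, (φ.coeff β * ∏ j, v j ^ β j) * v i ^ N * μ
        = (φ.coeff α₀ * ∏ j, v j ^ α₀ j) * v i ^ N * μ
          + ∑ β ∈ φ.support.erase α₀, (φ.coeff β * ∏ j, v j ^ β j) * v i ^ N * μ :=
      (Finset.add_sum_erase _ _ hα₀).symm
    have hmain : (φ.coeff α₀ * ∏ j, v j ^ α₀ j) * v i ^ N * μ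
        = φ.coeff α₀ * (∏ j, v j) ^ n := by
      rw [hmul]
      congr 1
      rw [← Finset.prod_pow]
      refine Finset.prod_congr rfl fun j _ => ?_
      congr 1
      have := hEn j
      omega
    have hfinal : φ.coeff α₀ * (∏ j, v j) ^ n ∈ Jn := by
      have h6 : φ.coeff α₀ * (∏ j, v j) ^ n
          = μ * ((MvPolynomial.eval v φ) * v i ^ N)
            - ∑ β ∈ φ.support.erase α₀, (φ.coeff β * ∏ j, v j ^ β j) * v i ^ N * μ := by
        rw [show μ * ((MvPolynomial.eval v φ) * v i ^ N)
          = (MvPolynomial.eval v φ) * v i ^ N * μ by ring, hexp, hsplit, hmain]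
        ring
      rw [h6]
      refine sub_mem (hP _ hrel) (Submodule.sum_mem _ fun β hβ => ?_)
      exact hterm β (Finset.mem_of_mem_erase hβ) (Finset.ne_of_mem_erase hβ)
    exact hLC n _ hfinal
  · rw [MvPolynomial.notMem_support_iff] at hα₀
    rw [hα₀]
    exact Ideal.zero_mem _

/-- Iterating the key lemma: colon elements lie in `P + Q^k` for every `k`. -/
lemma step (v : Fin L → R)
    (hLC : ∀ (n : ℕ) (c : R),
      c * (∏ j, v j) ^ n ∈ Ideal.span (Set.range fun j => v j ^ (n + 1)) →
        c ∈ Ideal.span (Set.range v))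
    (i : Fin L) (N : ℕ) :
    ∀ (k : ℕ) (a : R), a * v i ^ N ∈ Ideal.span (v '' {j | j < i}) →
      a ∈ Ideal.span (v '' {j | j < i}) ⊔ (Ideal.span (v '' {j | i ≤ j})) ^ k := by
  classical
  set P : Ideal R := Ideal.span (v '' {j | j < i}) with hPdef
  set Q : Ideal R := Ideal.span (v '' {j | i ≤ j}) with hQdef
  have hIPQ : Ideal.span (Set.range v) = P ⊔ Q := by
    rw [hPdef, hQdef, ← Ideal.span_union, ← Set.image_union]
    congr 1
    have : {j : Fin L | j < i} ∪ {j : Fin L | i ≤ j} = Set.univ := by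
      ext j
      simp only [Set.mem_union, Set.mem_setOf_eq, Set.mem_univ, iff_true]
      exact lt_or_ge j i
    rw [this, Set.image_univ]
  intro k
  induction k with
  | zero =>
    intro a _
    rw [pow_zero, Ideal.one_eq_top]
    exact le_sup_right (α := Ideal R) (by trivial : a ∈ (⊤ : Ideal R))
  | succ k ih =>
    intro a ha
    obtain ⟨p, hp, b, hb, hab⟩ := Submodule.mem_sup.mp (ih a ha)
    have hbrel : b * v i ^ N ∈ P := by
      have h1 : b * v i ^ N = a * v i ^ N - p * v i ^ N := by rw [← hab]; ring
      rw [h1]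
      exact sub_mem ha (Ideal.mul_mem_right _ _ hp)
    obtain ⟨φ, hφdeg, hφeval⟩ := rep_pow v {j | i ≤ j} k b hb
    have hbmem : b ∈ P ⊔ Q ^ (k + 1) := by
      rw [← hφeval, MvPolynomial.eval_eq' v φ]
      refine Submodule.sum_mem _ fun β hβ => ?_
      by_cases hc : ∀ j, j < i → β j = 0
      · have hcoeff : φ.coeff β ∈ P ⊔ Q := by
          rw [← hIPQ]
          exact key v hLC i N k φ hφdeg (hφeval ▸ hbrel) β (hφdeg β hβ) hc
        have hmono : (∏ j, v j ^ β j) ∈ Q ^ k := mono_mem_pow v i k β hc (hφdeg β hβ)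
        obtain ⟨p', hp', q', hq', hpq⟩ := Submodule.mem_sup.mp hcoeff
        rw [← hpq, add_mul]
        refine add_mem (Submodule.mem_sup_left (Ideal.mul_mem_right _ _ hp'))
          (Submodule.mem_sup_right ?_)
        rw [pow_succ']
        exact Ideal.mul_mem_mul hq' hmono
      · push_neg at hc
        obtain ⟨j, hj, hjne⟩ := hc
        refine Submodule.mem_sup_left (Ideal.mul_mem_left _ _ ?_)
        have h1 : ∏ t, v t ^ β t
            = ((∏ t ∈ Finset.univ.erase j, v t ^ β t) * v j ^ (β j - 1)) * v j := by
          rw [mul_assoc, ← pow_succ, Nat.sub_add_cancel (Nat.one_le_iff_ne_zero.mpr hjne),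
            Finset.prod_erase_mul _ _ (Finset.mem_univ j)]
        rw [h1]
        exact Ideal.mul_mem_left _ _ (Ideal.subset_span ⟨j, hj, rfl⟩)
    rw [← hab]
    exact add_mem (Submodule.mem_sup_left hp) hbmem

/-- The colon equality. -/
lemma colon [IsLocalRing R] [IsNoetherianRing R] (v : Fin L → R)
    (hv : ∀ j, v j ∈ maximalIdeal R)
    (hLC : ∀ (n : ℕ) (c : R),
      c * (∏ j, v j) ^ n ∈ Ideal.span (Set.range fun j => v j ^ (n + 1)) →
        c ∈ Ideal.span (Set.range v))
    (i : Fin L) (r : R) (h : r * v i ∈ Ideal.span (v '' {j | j < i})) :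
    r ∈ Ideal.span (v '' {j | j < i}) := by
  classical
  set P : Submodule R R := Ideal.span (v '' {j | j < i}) with hPdef
  set Q : Ideal R := Ideal.span (v '' {j | i ≤ j}) with hQdef
  have hQm : Q ≤ maximalIdeal R := by
    rw [hQdef, Ideal.span_le]
    rintro x ⟨j, -, rfl⟩
    exact hv j
  have hQtop : Q ≠ ⊤ := by
    intro hQ
    exact (maximalIdeal.isMaximal R).ne_top (top_le_iff.mp (hQ ▸ hQm))
  haveI : Module.Finite R (R ⧸ P) :=
    Module.Finite.of_surjective P.mkQ (Submodule.mkQ_surjective P)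
  have hbot : (⨅ k : ℕ, Q ^ k • (⊤ : Submodule R (R ⧸ P))) = ⊥ :=
    Ideal.iInf_pow_smul_eq_bot_of_isLocalRing (I := Q) (M := R ⧸ P) hQtop
  have hmk : Submodule.Quotient.mk (p := P) r = 0 := by
    rw [← Submodule.mem_bot (R := R), ← hbot, Submodule.mem_iInf]
    intro k
    have h1 : r * v i ^ 1 ∈ Ideal.span (v '' {j | j < i}) := by rwa [pow_one]
    obtain ⟨p, hp, b, hb, hab⟩ := Submodule.mem_sup.mp (step v hLC i 1 k r h1)
    have h2 : Submodule.Quotient.mk (p := P) r = Submodule.Quotient.mk (p := P) b := by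
      rw [← hab]
      refine (Submodule.Quotient.eq P).mpr ?_
      simpa using hp
    have h3 : Submodule.Quotient.mk (p := P) b = b • Submodule.Quotient.mk (p := P) 1 := by
      rw [← Submodule.Quotient.mk_smul, smul_eq_mul, mul_one]
    rw [h2, h3]
    exact Submodule.smul_mem_smul hb Submodule.mem_top
  rwa [Submodule.Quotient.mk_eq_zero] at hmk

end LimitClosureAux

/-- Let `(R,m)` be a Noetherian local ring of dimension `d` and suppose there
exists a system of parameters `x₁,…,x_d` whose limit closure equals `(x₁,…,x_d)`. Then `R` is
Cohen–Macaulay. -/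
theorem isCohenMacaulay_of_limitClosure_eq {R : Type*} [CommRing R] [IsLocalRing R]
    [IsNoetherianRing R] (d : ℕ) (hdim : ringKrullDim R = d)
    (xs : List R) (hlen : xs.length = d) (hmem : ∀ x ∈ xs, x ∈ maximalIdeal R)
    (hrad : (Ideal.span {x | x ∈ xs}).radical = maximalIdeal R)
    (hlc : limitClosure R xs = Ideal.span {x | x ∈ xs} • (⊤ : Submodule R R)) :
    IsCohenMacaulayLocalRing R := by
  classical
  subst hlen
  set v : Fin xs.length → R := fun j => xs.get j with hv
  have h1 : {x | x ∈ xs} = Set.range v := by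
    ext x
    simp [List.mem_iff_get, hv, Set.range, eq_comm]
  have hprod : xs.prod = ∏ j, v j := by
    conv_lhs => rw [← List.ofFn_get xs]
    rw [List.prod_ofFn]
  have hvmem : ∀ j, v j ∈ maximalIdeal R := fun j => hmem _ (xs.get_mem j)
  have hLC : ∀ (n : ℕ) (c : R),
      c * (∏ j, v j) ^ n ∈ Ideal.span (Set.range fun j => v j ^ (n + 1)) →
        c ∈ Ideal.span (Set.range v) := by
    intro n c hc
    have hcomp : c ∈ limitClosure R xs := by
      apply Submodule.mem_iSup_of_mem n
      rw [Submodule.mem_comap]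
      have himg : ((· ^ (n + 1)) '' {x | x ∈ xs}) = Set.range (fun j => v j ^ (n + 1)) := by
        rw [h1, ← Set.range_comp]
        rfl
      rw [himg, LimitClosureAux.ideal_smul_top]
      simpa [LinearMap.lsmul_apply, smul_eq_mul, hprod, mul_comm] using hc
    rw [hlc, LimitClosureAux.ideal_smul_top, h1] at hcomp
    exact hcomp
  refine ⟨xs, hmem, ?_, hdim.symm⟩
  rw [IsLocalRing.isRegular_iff_isWeaklyRegular_of_subset_maximalIdeal hmem]
  rw [RingTheory.Sequence.isWeaklyRegular_iff]
  intro i hi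
  set iF : Fin xs.length := ⟨i, hi⟩ with hiF
  have htake : Ideal.ofList (xs.take i) = Ideal.span (v '' {j | j < iF}) := by
    unfold Ideal.ofList
    congr 1
    ext x
    constructor
    · intro hx
      simp only [Set.mem_setOf_eq] at hx
      rw [List.mem_take_iff_getElem] at hx
      obtain ⟨m, hm, rfl⟩ := hx
      have hm1 : m < xs.length := lt_of_lt_of_le hm (min_le_right _ _)
      have hm2 : m < i := lt_of_lt_of_le hm (min_le_left _ _)
      exact ⟨⟨m, hm1⟩, hm2, rfl⟩
    · rintro ⟨j, hj, rfl⟩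
      simp only [Set.mem_setOf_eq]
      rw [List.mem_take_iff_getElem]
      have hj' : (j : ℕ) < i := hj
      exact ⟨j, lt_min hj' j.isLt, rfl⟩
  have hN' : Ideal.ofList (xs.take i) • (⊤ : Submodule R R)
      = Ideal.span (v '' {j | j < iF}) := by
    rw [LimitClosureAux.ideal_smul_top, htake]
  intro a b hab
  obtain ⟨ra, rfl⟩ := Submodule.Quotient.mk_surjective _ a
  obtain ⟨rb, rfl⟩ := Submodule.Quotient.mk_surjective _ b
  beta_reduce at hab
  rw [← Submodule.Quotient.mk_smul, ← Submodule.Quotient.mk_smul, Submodule.Quotient.eq] at hab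
  rw [Submodule.Quotient.eq, hN']
  rw [hN'] at hab
  have hxi : v iF = xs[i] := rfl
  have heq : xs[i] • ra - xs[i] • rb = (ra - rb) * v iF := by
    rw [hxi, smul_eq_mul, smul_eq_mul]
    ring
  have hab' : (ra - rb) * v iF ∈ Ideal.span (v '' {j | j < iF}) := by
    rw [← heq]
    exact hab
  exact LimitClosureAux.colon v hvmem hLC iF _ hab'
end

section
/- Let (R,m) be a Noetherian local ring and q an m-primary irreducible ideal. Then dim_{R/m} Hom_R(R/m, R/q) = 1. -/
/-!
Since `q` is `m`-primary, `m` is the unique associated prime of `R ⧸ q`, so some nonzero element of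
`R ⧸ q` is killed by `m`. Irreducibility of `q` says that any two nonzero submodules of `R ⧸ q`
meet nontrivially. Given socle elements `s` and `t ≠ 0`, pick `r • s = u • t ≠ 0`; as `t` is killed
by `m`, the scalar `u` lies outside `m`, hence is a unit, and `t = (u⁻¹ * r) • s`.
-/

open IsLocalRing

/-- An ideal `q` is irreducible if whenever `q = J ∩ K` then `q = J` or `q = K`. -/
def IrreducibleIdeal {R : Type*} [CommRing R] (q : Ideal R) : Prop :=
  ∀ J K : Ideal R, q = J ⊓ K → q = J ∨ q = K

section

variable {R M : Type*} [CommRing R] [AddCommGroup M] [Module R M]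

theorem torsionBySet_ne_bot_of_isAssociatedPrime [IsNoetherianRing R] {I : Ideal R}
    (h : IsAssociatedPrime I M) : Submodule.torsionBySet R M I ≠ ⊥ := by
  obtain ⟨hI, x, rfl⟩ := isAssociatedPrime_iff.1 h
  refine (Submodule.ne_bot_iff _).2 ⟨x, ?_, ?_⟩
  · exact (Submodule.mem_torsionBySet_iff _ _).2 fun ⟨r, hr⟩ ↦ by
      simpa [Submodule.mem_colon_singleton] using hr
  · rintro rfl
    exact hI.ne_top (by simp)

theorem IrreducibleIdeal.inf_ne_bot {q : Ideal R} (hq : IrreducibleIdeal q)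
    {N P : Submodule R (R ⧸ q)} (hN : N ≠ ⊥) (hP : P ≠ ⊥) : N ⊓ P ≠ ⊥ := by
  intro h
  have comap_bot : (⊥ : Submodule R (R ⧸ q)).comap (Submodule.mkQ q) = q := by
    rw [Submodule.comap_bot, Submodule.ker_mkQ]
  have comap_inj := Submodule.comap_injective_of_surjective (Submodule.mkQ_surjective q)
  rcases hq (N.comap (Submodule.mkQ q)) (P.comap (Submodule.mkQ q))
    (by rw [← Submodule.comap_inf, h, comap_bot]) with e | e
  exacts [hN (comap_inj (e.symm.trans comap_bot.symm)),
    hP (comap_inj (e.symm.trans comap_bot.symm))]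

theorem IsLocalRing.isUnit_of_smul_ne_zero_of_mem_torsionBySet [IsLocalRing R] {s : M}
    (hs : s ∈ Submodule.torsionBySet R M (maximalIdeal R)) {r : R} (h : r • s ≠ 0) :
    IsUnit r := by
  by_contra hr
  exact h ((Submodule.mem_torsionBySet_iff _ _).1 hs ⟨r, (mem_maximalIdeal r).2 hr⟩)

theorem IsLocalRing.exists_smul_eq_of_mem_torsionBySet [IsLocalRing R] {s t : M}
    (ht : t ∈ Submodule.torsionBySet R M (maximalIdeal R))
    (h : (R ∙ s) ⊓ (R ∙ t) ≠ ⊥) : ∃ r : R, t = r • s := by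
  obtain ⟨c, ⟨hcs, hct⟩, hc⟩ := (Submodule.ne_bot_iff _).1 h
  obtain ⟨r, rfl⟩ := Submodule.mem_span_singleton.1 hcs
  obtain ⟨u, hu⟩ := Submodule.mem_span_singleton.1 hct
  obtain ⟨u, rfl⟩ := isUnit_of_smul_ne_zero_of_mem_torsionBySet ht (hu ▸ hc)
  exact ⟨↑u⁻¹ * r, by rw [mul_smul, ← hu]; exact (inv_smul_smul u t).symm⟩

end

/-- Let `(R,m)` be a Noetherian local ring and `q` an `m`-primary irreducible
ideal. Then the socle `Hom_R(R/m, R/q) = (0 :_{R/q} m)` is one-dimensional over `R/m`: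
it is nonzero, and every nonzero element of it generates it. -/
theorem socle_one_dimensional_of_irreducible {R : Type*} [CommRing R] [IsLocalRing R]
    [IsNoetherianRing R] (q : Ideal R) (hq : (q : Ideal R).radical = maximalIdeal R)
    (hirr : IrreducibleIdeal q) :
    Submodule.torsionBySet R (R ⧸ q) ((maximalIdeal R : Ideal R) : Set R) ≠ ⊥ ∧
      ∀ s ∈ Submodule.torsionBySet R (R ⧸ q) ((maximalIdeal R : Ideal R) : Set R), s ≠ 0 →
        ∀ t ∈ Submodule.torsionBySet R (R ⧸ q) ((maximalIdeal R : Ideal R) : Set R),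
          ∃ r : R, t = r • s := by
  have hprimary : q.IsPrimary :=
    Ideal.isPrimary_of_isMaximal_radical (hq ▸ maximalIdeal.isMaximal R)
  have hass : IsAssociatedPrime (maximalIdeal R) (R ⧸ q) := by
    rw [← AssociatedPrimes.mem_iff, associatedPrimes.eq_singleton_of_isPrimary hprimary, hq]
    rfl
  refine ⟨torsionBySet_ne_bot_of_isAssociatedPrime hass, fun s hs hs0 t ht ↦ ?_⟩
  rcases eq_or_ne t 0 with rfl | ht0
  · exact ⟨0, (zero_smul R s).symm⟩
  refine exists_smul_eq_of_mem_torsionBySet ht (hirr.inf_ne_bot ?_ ?_) <;>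
    rwa [Ne, Submodule.span_singleton_eq_bot]
end
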